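/- arXiv:math/9201252 — 5 statements merged into one kernel-verified Lean document; each statement's English description precedes it below -/
import Mathlib

section
/- Let (Y, B, ν) be a probability space, φ: Y → [0,1] a measurable inverse-measure-preserving function (the pushforward of ν under φ is Lebesgue measure μ on the Borel σ-algebra Σ of [0,1]), and ⟨ν_x : x ∈ [0,1]⟩ a Borel disintegration of ν: each ν_x is a probability measure on B, for each bounded B-measurable g: Y → ℝ the function x ↦ ∫ g dν_x is Borel measurable, and for every Borel set E ⊆ [0,1], ∫_E (∫ g dν_x) dμ(x) = ∫_{φ⁻¹(E)} g dν. If ρ is a linear lifting for L∞(Y,B,ν), then the map ρ̄ defined by ρ̄(f)(x) = ∫ ρ(f ∘ φ) dν_x, for f ∈ L∞([0,1],Σ,μ) and x ∈ [0,1], is a well-defined linear lifting for L∞([0,1],Σ,μ). -/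
/-!
Since `ρ` respects equality `ν`-a.e. and `φ` is measure preserving, `f ↦ ρ(f ∘ φ)` only depends
on the class of `f` in L∞(μ); linearity, positivity and `ρ̄(1) = 1` pass through the integrals
against the probability measures `ν_x`. The one real point is `ρ̄(f) = f` a.e.: by the
disintegration property, for every measurable `E`,
`∫_E ρ̄(f) dμ = ∫_{φ⁻¹E} ρ(f ∘ φ) dν = ∫_{φ⁻¹E} f ∘ φ dν = ∫_E f dμ`,
and two bounded functions with the same integral over every measurable set agree a.e.
-/

open MeasureTheory

/-- The unit interval `[0,1]` with its Borel σ-algebra and Lebesgue measure (`volume`). -/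
abbrev I01 := Set.Icc (0:ℝ) 1

/-- `f` belongs to L∞(Y,B,ν): it is measurable and bounded. -/
def MemLinf {Y : Type*} [MeasurableSpace Y] (f : Y → ℝ) : Prop :=
  Measurable f ∧ ∃ M : ℝ, ∀ y, |f y| ≤ M

/-- `ρ` is a linear lifting for L∞(Y,B,ν). -/
structure IsLinearLifting {Y : Type*} [MeasurableSpace Y] (ν : Measure Y)
    (ρ : (Y → ℝ) → (Y → ℝ)) : Prop where
  mem : ∀ f, MemLinf f → MemLinf (ρ f)
  congr_ae : ∀ f g, MemLinf f → MemLinf g → f =ᵐ[ν] g → ρ f = ρ g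
  ae_eq : ∀ f, MemLinf f → ρ f =ᵐ[ν] f
  linear : ∀ f g, MemLinf f → MemLinf g → ∀ x y : ℝ,
    ρ (fun t => x * f t + y * g t) = fun t => x * ρ f t + y * ρ g t
  map_one : ρ (fun _ => (1:ℝ)) = fun _ => (1:ℝ)
  nonneg : ∀ f, MemLinf f → (∀ᵐ y ∂ν, 0 ≤ f y) → ∀ y, 0 ≤ ρ f y

namespace MemLinf

variable {X Y : Type*} [MeasurableSpace X] [MeasurableSpace Y]

theorem comp {f : X → ℝ} (hf : MemLinf f) {φ : Y → X} (hφ : Measurable φ) :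
    MemLinf (f ∘ φ) :=
  ⟨hf.1.comp hφ, hf.2.imp fun _ hM y => hM (φ y)⟩

theorem integrable {f : X → ℝ} (hf : MemLinf f) (μ : Measure X) [IsFiniteMeasure μ] :
    Integrable f μ := by
  obtain ⟨hm, M, hM⟩ := hf
  exact .of_bound hm.aestronglyMeasurable M (.of_forall hM)

theorem integral_probabilityMeasure {g : Y → ℝ} (hg : MemLinf g) {κ : X → Measure Y}
    (hκ : ∀ x, IsProbabilityMeasure (κ x)) (hmeas : Measurable fun x => ∫ y, g y ∂κ x) :
    MemLinf fun x => ∫ y, g y ∂κ x := by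
  obtain ⟨-, M, hM⟩ := hg
  refine ⟨hmeas, M, fun x => ?_⟩
  simpa using norm_integral_le_of_norm_le_const (μ := κ x) (f := g) (.of_forall hM)

theorem ae_eq_of_forall_setIntegral_eq {μ : Measure X} [IsFiniteMeasure μ] {f g : X → ℝ}
    (hf : MemLinf f) (hg : MemLinf g)
    (h : ∀ s, MeasurableSet s → ∫ x in s, f x ∂μ = ∫ x in s, g x ∂μ) : f =ᵐ[μ] g :=
  ae_eq_of_forall_setIntegral_eq_of_sigmaFinite (fun _ _ _ => (hf.integrable μ).integrableOn)
    (fun _ _ _ => (hg.integrable μ).integrableOn) fun s hs _ => h s hs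

end MemLinf

theorem MeasureTheory.MeasurePreserving.setIntegral_preimage {X Y : Type*} [MeasurableSpace X]
    [MeasurableSpace Y] {μ : Measure X} {ν : Measure Y} {φ : Y → X}
    (hφ : MeasurePreserving φ ν μ) {f : X → ℝ} (hf : AEStronglyMeasurable f μ) {s : Set X}
    (hs : MeasurableSet s) : ∫ y in φ ⁻¹' s, f (φ y) ∂ν = ∫ x in s, f x ∂μ := by
  rw [← hφ.map_eq] at hf ⊢
  exact (setIntegral_map hs hf hφ.measurable.aemeasurable).symm

section Pushforward

variable {X Y : Type*} [MeasurableSpace Y]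

/-- The paper's `ρ̄`, for a general family `κ` in place of the disintegration `⟨ν_x⟩`. -/
noncomputable def liftingPushforward (ρ : (Y → ℝ) → (Y → ℝ)) (φ : Y → X) (κ : X → Measure Y) :
    (X → ℝ) → (X → ℝ) :=
  fun f x => ∫ y, ρ (f ∘ φ) y ∂κ x

variable {ν : Measure Y} {φ : Y → X} {κ : X → Measure Y} {ρ : (Y → ℝ) → (Y → ℝ)}

theorem liftingPushforward_one (hρ : IsLinearLifting ν ρ) (hκ : ∀ x, IsProbabilityMeasure (κ x)) :
    liftingPushforward ρ φ κ (fun _ => 1) = fun _ => 1 := by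
  funext x
  simp [liftingPushforward, Function.comp_def, hρ.map_one]

variable [MeasurableSpace X] {μ : Measure X}

theorem memLinf_liftingPushforward (hρ : IsLinearLifting ν ρ) (hφ : Measurable φ)
    (hκ : ∀ x, IsProbabilityMeasure (κ x))
    (hmeas : ∀ g : Y → ℝ, MemLinf g → Measurable fun x => ∫ y, g y ∂κ x)
    {f : X → ℝ} (hf : MemLinf f) : MemLinf (liftingPushforward ρ φ κ f) :=
  have hρf := hρ.mem _ (hf.comp hφ)
  hρf.integral_probabilityMeasure hκ (hmeas _ hρf)

theorem liftingPushforward_congr_ae (hρ : IsLinearLifting ν ρ) (hφ : MeasurePreserving φ ν μ)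
    {f g : X → ℝ} (hf : MemLinf f) (hg : MemLinf g) (hfg : f =ᵐ[μ] g) :
    liftingPushforward ρ φ κ f = liftingPushforward ρ φ κ g := by
  have hcomp : f ∘ φ =ᵐ[ν] g ∘ φ := hφ.quasiMeasurePreserving.ae_eq_comp hfg
  unfold liftingPushforward
  rw [hρ.congr_ae _ _ (hf.comp hφ.measurable) (hg.comp hφ.measurable) hcomp]

theorem liftingPushforward_ae_eq [IsFiniteMeasure μ] (hρ : IsLinearLifting ν ρ)
    (hφ : MeasurePreserving φ ν μ) (hκ : ∀ x, IsProbabilityMeasure (κ x))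
    (hmeas : ∀ g : Y → ℝ, MemLinf g → Measurable fun x => ∫ y, g y ∂κ x)
    (hdis : ∀ g : Y → ℝ, MemLinf g → ∀ E : Set X, MeasurableSet E →
      ∫ x in E, (∫ y, g y ∂κ x) ∂μ = ∫ y in φ ⁻¹' E, g y ∂ν)
    {f : X → ℝ} (hf : MemLinf f) : liftingPushforward ρ φ κ f =ᵐ[μ] f := by
  have hfφ := hf.comp hφ.measurable
  refine (memLinf_liftingPushforward hρ hφ.measurable hκ hmeas hf).ae_eq_of_forall_setIntegral_eq
    hf fun E hE => ?_
  calc ∫ x in E, liftingPushforward ρ φ κ f x ∂μ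
      = ∫ y in φ ⁻¹' E, ρ (f ∘ φ) y ∂ν := hdis _ (hρ.mem _ hfφ) E hE
    _ = ∫ y in φ ⁻¹' E, f (φ y) ∂ν :=
        setIntegral_congr_ae (hφ.measurable hE) ((hρ.ae_eq _ hfφ).mono fun _ h _ => h)
    _ = ∫ x in E, f x ∂μ := hφ.setIntegral_preimage hf.1.aestronglyMeasurable hE

theorem liftingPushforward_linear (hρ : IsLinearLifting ν ρ) (hφ : Measurable φ)
    (hκ : ∀ x, IsProbabilityMeasure (κ x)) {f g : X → ℝ} (hf : MemLinf f) (hg : MemLinf g)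
    (a b : ℝ) :
    liftingPushforward ρ φ κ (fun t => a * f t + b * g t) =
      fun t => a * liftingPushforward ρ φ κ f t + b * liftingPushforward ρ φ κ g t := by
  funext x
  have hfφ := hf.comp hφ
  have hgφ := hg.comp hφ
  have hρf := ((hρ.mem _ hfφ).integrable (κ x)).const_mul a
  have hρg := ((hρ.mem _ hgφ).integrable (κ x)).const_mul b
  simp only [liftingPushforward]
  rw [show (fun t => a * f t + b * g t) ∘ φ = fun y => a * (f ∘ φ) y + b * (g ∘ φ) y from rfl,
    hρ.linear _ _ hfφ hgφ, integral_add hρf hρg, integral_const_mul, integral_const_mul]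

theorem liftingPushforward_nonneg (hρ : IsLinearLifting ν ρ) (hφ : MeasurePreserving φ ν μ)
    {f : X → ℝ} (hf : MemLinf f) (h0 : ∀ᵐ x ∂μ, 0 ≤ f x) (x : X) :
    0 ≤ liftingPushforward ρ φ κ f x :=
  integral_nonneg <| hρ.nonneg _ (hf.comp hφ.measurable) (hφ.quasiMeasurePreserving.ae h0)

theorem IsLinearLifting.liftingPushforward [IsFiniteMeasure μ] (hρ : IsLinearLifting ν ρ)
    (hφ : MeasurePreserving φ ν μ) (hκ : ∀ x, IsProbabilityMeasure (κ x))
    (hmeas : ∀ g : Y → ℝ, MemLinf g → Measurable fun x => ∫ y, g y ∂κ x)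
    (hdis : ∀ g : Y → ℝ, MemLinf g → ∀ E : Set X, MeasurableSet E →
      ∫ x in E, (∫ y, g y ∂κ x) ∂μ = ∫ y in φ ⁻¹' E, g y ∂ν) :
    IsLinearLifting μ (liftingPushforward ρ φ κ) where
  mem _ := memLinf_liftingPushforward hρ hφ.measurable hκ hmeas
  congr_ae _ _ := liftingPushforward_congr_ae hρ hφ
  ae_eq _ := liftingPushforward_ae_eq hρ hφ hκ hmeas hdis
  linear _ _ hf hg := liftingPushforward_linear hρ hφ.measurable hκ hf hg
  map_one := liftingPushforward_one hρ hκ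
  nonneg _ := liftingPushforward_nonneg hρ hφ

end Pushforward

theorem pushforward_linearLifting_general {Y : Type*} [MeasurableSpace Y] (ν : Measure Y)
    (φ : Y → I01) (hφmeas : Measurable φ) (hφ : Measure.map φ ν = (volume : Measure I01))
    (νx : I01 → Measure Y) (hprob : ∀ x, IsProbabilityMeasure (νx x))
    (hmeas : ∀ g : Y → ℝ, MemLinf g → Measurable (fun x : I01 => ∫ y, g y ∂(νx x)))
    (hdis : ∀ g : Y → ℝ, MemLinf g → ∀ E : Set I01, MeasurableSet E →
      ∫ x in E, (∫ y, g y ∂(νx x)) ∂(volume : Measure I01) = ∫ y in φ ⁻¹' E, g y ∂ν)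
    (ρ : (Y → ℝ) → (Y → ℝ)) (hρ : IsLinearLifting ν ρ) :
    IsLinearLifting (volume : Measure I01)
      (fun (f : I01 → ℝ) (x : I01) => ∫ y, ρ (f ∘ φ) y ∂(νx x)) :=
  hρ.liftingPushforward ⟨hφmeas, hφ⟩ hprob hmeas hdis

/-- Given a measurable inverse-measure-preserving `φ : Y → [0,1]`, a Borel disintegration
`⟨ν_x : x ∈ [0,1]⟩` of `ν`, and a linear lifting `ρ` for L∞(Y,B,ν), the map
`ρ̄(f)(x) = ∫ ρ(f ∘ φ) dν_x` is a (well-defined) linear lifting for L∞([0,1],Σ,μ). -/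
theorem pushforward_linearLifting {Y : Type*} [MeasurableSpace Y] (ν : Measure Y)
    [IsProbabilityMeasure ν]
    (φ : Y → I01) (hφmeas : Measurable φ) (hφ : Measure.map φ ν = (volume : Measure I01))
    (νx : I01 → Measure Y) (hprob : ∀ x, IsProbabilityMeasure (νx x))
    (hmeas : ∀ g : Y → ℝ, MemLinf g → Measurable (fun x : I01 => ∫ y, g y ∂(νx x)))
    (hdis : ∀ g : Y → ℝ, MemLinf g → ∀ E : Set I01, MeasurableSet E →
      ∫ x in E, (∫ y, g y ∂(νx x)) ∂(volume : Measure I01) = ∫ y in φ ⁻¹' E, g y ∂ν)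
    (ρ : (Y → ℝ) → (Y → ℝ)) (hρ : IsLinearLifting ν ρ) :
    IsLinearLifting (volume : Measure I01)
      (fun (f : I01 → ℝ) (x : I01) => ∫ y, ρ (f ∘ φ) y ∂(νx x)) :=
  pushforward_linearLifting_general ν φ hφmeas hφ νx hprob hmeas hdis ρ hρ
end

section
/- Let (Y, B, ν) be a probability space, φ: Y → [0,1] a measurable inverse-measure-preserving function (the pushforward of ν under φ is Lebesgue measure μ on the Borel σ-algebra Σ of [0,1]), and ⟨ν_x : x ∈ [0,1]⟩ a Borel disintegration of ν: each ν_x is a probability measure on B, for each bounded B-measurable g: Y → ℝ the function x ↦ ∫ g dν_x is Borel measurable, and for every Borel set E ⊆ [0,1], ∫_E (∫ g dν_x) dμ(x) = ∫_{φ⁻¹(E)} g dν. If L∞([0,1],Σ,μ) has no linear lifting, then L∞(Y,B,ν) has no linear lifting; in particular, (Y,B,ν) has no lifting. -/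
open MeasureTheory

/-- `ρ` is a lifting for L∞(Y,B,ν): a multiplicative linear lifting. -/
structure IsLifting {Y : Type*} [MeasurableSpace Y] (ν : Measure Y)
    (ρ : (Y → ℝ) → (Y → ℝ)) extends IsLinearLifting ν ρ : Prop where
  mult : ∀ f g, MemLinf f → MemLinf g →
    ρ (fun t => f t * g t) = fun t => ρ f t * ρ g t


lemma integrable_of_memLinf {Y : Type*} [MeasurableSpace Y] (m : Measure Y)
    [IsFiniteMeasure m] {f : Y → ℝ} (hf : MemLinf f) : Integrable f m := by
  obtain ⟨hm, M, hM⟩ := hf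
  exact ⟨hm.aestronglyMeasurable,
    MeasureTheory.HasFiniteIntegral.of_bounded (C := M)
      (Filter.Eventually.of_forall fun y => by simpa [Real.norm_eq_abs] using hM y)⟩

/-- If `(Y,B,ν)` admits a measurable inverse-measure-preserving map onto `[0,1]` with a
Borel disintegration, and L∞([0,1],Σ,μ) has no linear lifting, then L∞(Y,B,ν) has no
linear lifting; in particular `(Y,B,ν)` has no lifting. -/
theorem no_linearLifting_of_no_linearLifting_base {Y : Type*} [MeasurableSpace Y]
    (ν : Measure Y) [IsProbabilityMeasure ν]
    (φ : Y → I01) (hφmeas : Measurable φ) (hφ : Measure.map φ ν = (volume : Measure I01))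
    (νx : I01 → Measure Y) (hprob : ∀ x, IsProbabilityMeasure (νx x))
    (hmeas : ∀ g : Y → ℝ, MemLinf g → Measurable (fun x : I01 => ∫ y, g y ∂(νx x)))
    (hdis : ∀ g : Y → ℝ, MemLinf g → ∀ E : Set I01, MeasurableSet E →
      ∫ x in E, (∫ y, g y ∂(νx x)) ∂(volume : Measure I01) = ∫ y in φ ⁻¹' E, g y ∂ν)
    (hno : ¬ ∃ ρ : (I01 → ℝ) → (I01 → ℝ), IsLinearLifting (volume : Measure I01) ρ) :
    (¬ ∃ ρ : (Y → ℝ) → (Y → ℝ), IsLinearLifting ν ρ) ∧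
    (¬ ∃ ρ : (Y → ℝ) → (Y → ℝ), IsLifting ν ρ) := by
  haveI probI : IsProbabilityMeasure (volume : Measure I01) := by
    rw [← hφ]; exact Measure.isProbabilityMeasure_map hφmeas.aemeasurable
  have key : (∃ ρ : (Y → ℝ) → (Y → ℝ), IsLinearLifting ν ρ) →
      ∃ ρ : (I01 → ℝ) → (I01 → ℝ), IsLinearLifting (volume : Measure I01) ρ := by
    rintro ⟨ρ, hρ⟩
    have comp_mem : ∀ f : I01 → ℝ, MemLinf f → MemLinf (f ∘ φ) := by
      rintro f ⟨hm, M, hM⟩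
      exact ⟨hm.comp hφmeas, M, fun y => hM _⟩
    set σ : (I01 → ℝ) → (I01 → ℝ) := fun f x => ∫ y, ρ (f ∘ φ) y ∂(νx x) with hσ
    have σmem : ∀ f, MemLinf f → MemLinf (σ f) := by
      intro f hf
      obtain ⟨hm, M, hM⟩ := hρ.mem _ (comp_mem f hf)
      refine ⟨hmeas _ ⟨hm, M, hM⟩, M, fun x => ?_⟩
      haveI := hprob x
      have hb : ∀ᵐ y ∂(νx x), ‖ρ (f ∘ φ) y‖ ≤ M :=
        Filter.Eventually.of_forall fun y => by rw [Real.norm_eq_abs]; exact hM y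
      have := norm_integral_le_of_norm_le_const (μ := νx x) hb
      simpa [Real.norm_eq_abs, measure_univ] using this
    refine ⟨σ, ?_, ?_, ?_, ?_, ?_, ?_⟩
    · exact σmem
    · intro f g hf hg h
      have h' : f ∘ φ =ᵐ[ν] g ∘ φ :=
        MeasureTheory.ae_eq_comp hφmeas.aemeasurable (hφ ▸ h)
      have := hρ.congr_ae _ _ (comp_mem f hf) (comp_mem g hg) h'
      funext x; simp only [hσ, this]
    · intro f hf
      have hmemρ := hρ.mem _ (comp_mem f hf)
      refine ae_eq_of_forall_setIntegral_eq_of_sigmaFinite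
        (fun s hs _ => (integrable_of_memLinf _ (σmem f hf)).integrableOn)
        (fun s hs _ => (integrable_of_memLinf _ hf).integrableOn) ?_
      intro E hE _
      have h1 : ∫ x in E, σ f x ∂(volume : Measure I01)
          = ∫ y in φ ⁻¹' E, ρ (f ∘ φ) y ∂ν := hdis _ hmemρ E hE
      have h2 : ∫ y in φ ⁻¹' E, ρ (f ∘ φ) y ∂ν = ∫ y in φ ⁻¹' E, (f ∘ φ) y ∂ν := by
        refine integral_congr_ae (Filter.EventuallyEq.restrict ?_)
        exact hρ.ae_eq _ (comp_mem f hf)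
      have h3 : ∫ y in φ ⁻¹' E, (f ∘ φ) y ∂ν = ∫ x in E, f x ∂(volume : Measure I01) := by
        rw [← hφ, setIntegral_map hE]
        · rfl
        · exact (hf.1.comp measurable_id).aestronglyMeasurable
        · exact hφmeas.aemeasurable
      rw [h1, h2, h3]
    · intro f g hf hg a b
      have hcomp : (fun t => a * f t + b * g t) ∘ φ
          = fun t => a * (f ∘ φ) t + b * (g ∘ φ) t := rfl
      have hlin := hρ.linear (f ∘ φ) (g ∘ φ) (comp_mem f hf) (comp_mem g hg) a b
      funext x
      haveI := hprob x
      have hif := integrable_of_memLinf (νx x) (hρ.mem _ (comp_mem f hf))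
      have hig := integrable_of_memLinf (νx x) (hρ.mem _ (comp_mem g hg))
      simp only [hσ, hcomp, hlin]
      rw [integral_add (hif.const_mul a) (hig.const_mul b),
        integral_const_mul, integral_const_mul]
    · have hone : (fun _ : I01 => (1:ℝ)) ∘ φ = fun _ : Y => (1:ℝ) := rfl
      funext x
      haveI := hprob x
      simp [hσ, hone, hρ.map_one, measure_univ]
    · intro f hf h
      have hset : MeasurableSet {x : I01 | 0 ≤ f x} := hf.1 measurableSet_Ici
      have h' : ∀ᵐ y ∂ν, 0 ≤ (f ∘ φ) y :=
        (MeasureTheory.ae_map_iff hφmeas.aemeasurable hset).mp (hφ ▸ h)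
      intro x
      exact integral_nonneg (hρ.nonneg _ (comp_mem f hf) h')
  constructor
  · exact fun h => hno (key h)
  · rintro ⟨ρ, hρ⟩
    exact hno (key ⟨ρ, hρ.toIsLinearLifting⟩)
end

section
/- Let ρ be a linear lifting for L∞([0,1],Σ,μ) and let c ∈ (0,1) be ρ-correct. Then for every real x with 0 ≤ x < c, ρ(χ_{(x,c)})(c) = ρ(χ_{(0,c)})(c), and for every real y with c < y ≤ 1, ρ(χ_{(c,y)})(c) = ρ(χ_{(c,1)})(c). -/
open MeasureTheory

/-- The open subinterval `(a,b)` of `[0,1]`. -/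
def intOO (a b : ℝ) : Set I01 := {x : I01 | a < (x : ℝ) ∧ (x : ℝ) < b}

/-- The characteristic function of a subset of `[0,1]`. -/
noncomputable def chi (S : Set I01) : I01 → ℝ := S.indicator fun _ => 1

/-- `c` is `ρ`-correct: for every pair of rationals `0 ≤ a < b ≤ 1`,
`ρ(χ_(a,b))(c) = χ_(a,b)(c)`. -/
def RhoCorrect (ρ : (I01 → ℝ) → (I01 → ℝ)) (c : I01) : Prop :=
  ∀ a b : ℚ, 0 ≤ a → a < b → (b : ℝ) ≤ 1 →
    ρ (chi (intOO a b)) c = chi (intOO a b) c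

lemma measurableSet_intOO (a b : ℝ) : MeasurableSet (intOO a b) := by
  have h : intOO a b = (fun x : I01 => (x : ℝ)) ⁻¹' (Set.Ioo a b) := rfl
  rw [h]
  exact measurable_subtype_coe measurableSet_Ioo

lemma memLinf_chi {S : Set I01} (hS : MeasurableSet S) : MemLinf (chi S) := by
  refine ⟨Measurable.indicator measurable_const hS, 1, fun y => ?_⟩
  by_cases h : y ∈ S <;> simp [chi, Set.indicator_apply, h]

lemma chi_nonneg (S : Set I01) (y : I01) : 0 ≤ chi S y :=
  Set.indicator_nonneg (fun _ _ => zero_le_one) y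

lemma chi_le_one (S : Set I01) (y : I01) : chi S y ≤ 1 := by
  by_cases h : y ∈ S <;> simp [chi, Set.indicator_apply, h]

lemma rho_chi_zero (ρ : (I01 → ℝ) → (I01 → ℝ))
    (hρ : IsLinearLifting (volume : Measure I01) ρ) (c : I01)
    (hcor : RhoCorrect ρ c) (D : Set I01) (hD : MeasurableSet D)
    (a b : ℚ) (ha : 0 ≤ a) (hab : a < b) (hb : (b : ℝ) ≤ 1)
    (hsub : D ⊆ intOO a b) (hc : c ∉ intOO (a : ℝ) b) :
    ρ (chi D) c = 0 := by
  have h1 : ρ (chi (intOO a b)) c = 0 := by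
    rw [hcor a b ha hab hb]
    simp [chi, Set.indicator_apply, hc]
  have memD := memLinf_chi hD
  have memAB := memLinf_chi (measurableSet_intOO a b)
  have hge : 0 ≤ ρ (chi D) c :=
    hρ.nonneg _ memD (Filter.Eventually.of_forall (chi_nonneg D)) c
  have memh : MemLinf (fun t => 1 * chi (intOO a b) t + (-1) * chi D t) := by
    refine ⟨(measurable_const.mul memAB.1).add (measurable_const.mul memD.1), 2, fun y => ?_⟩
    have h2 := chi_nonneg (intOO (a:ℝ) b) y
    have h3 := chi_le_one (intOO (a:ℝ) b) y
    have h4 := chi_nonneg D y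
    have h5 := chi_le_one D y
    rw [abs_le]; constructor <;> simp only [one_mul, neg_one_mul] <;> linarith
  have hpos : ∀ y, 0 ≤ ρ (fun t => 1 * chi (intOO a b) t + (-1) * chi D t) y := by
    refine hρ.nonneg _ memh (Filter.Eventually.of_forall fun y => ?_)
    have h4 : chi D y ≤ chi (intOO (a:ℝ) b) y :=
      Set.indicator_le_indicator_of_subset hsub (fun _ => zero_le_one) y
    simp only [one_mul, neg_one_mul]; linarith
  have hl := hρ.linear _ _ memAB memD 1 (-1)
  have := hpos c
  rw [hl] at this
  simp only [one_mul, neg_one_mul, h1] at this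
  linarith

/-- For a `ρ`-correct `c ∈ (0,1)`: `ρ(χ_(x,c))(c) = ρ(χ_(0,c))(c)` whenever `0 ≤ x < c`,
and `ρ(χ_(c,y))(c) = ρ(χ_(c,1))(c)` whenever `c < y ≤ 1`. -/
theorem rho_interval_stable (ρ : (I01 → ℝ) → (I01 → ℝ))
    (hρ : IsLinearLifting (volume : Measure I01) ρ)
    (c : I01) (hc0 : 0 < (c : ℝ)) (hc1 : (c : ℝ) < 1) (hcor : RhoCorrect ρ c) :
    (∀ x : ℝ, 0 ≤ x → x < (c : ℝ) →
      ρ (chi (intOO x c)) c = ρ (chi (intOO 0 c)) c) ∧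
    (∀ y : ℝ, (c : ℝ) < y → y ≤ 1 →
      ρ (chi (intOO c y)) c = ρ (chi (intOO c 1)) c) := by
  have hsplit : ∀ (A B : Set I01), MeasurableSet A → MeasurableSet B → B ⊆ A →
      ρ (chi (A \ B)) c = 0 → ρ (chi A) c = ρ (chi B) c := by
    intro A B hA hB hBA hzero
    have heq : chi A = fun t => 1 * chi B t + 1 * chi (A \ B) t := by
      funext t
      by_cases h1 : t ∈ B
      · have h2 : t ∈ A := hBA h1
        simp [chi, Set.indicator_apply, h1, h2]
      · by_cases h2 : t ∈ A <;> simp [chi, Set.indicator_apply, h1, h2]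
    have hl := hρ.linear _ _ (memLinf_chi hB) (memLinf_chi (hA.diff hB)) 1 1
    rw [heq]
    rw [hl]
    simp [hzero]
  constructor
  · intro x hx0 hxc
    obtain ⟨q, hq1, hq2⟩ := exists_rat_btwn hxc
    have hq0 : (0:ℚ) < q := by
      have : (0:ℝ) < q := lt_of_le_of_lt hx0 hq1
      exact_mod_cast this
    have hsub : intOO x c ⊆ intOO 0 c := fun t ht => ⟨lt_of_le_of_lt hx0 ht.1, ht.2⟩
    symm
    refine hsplit _ _ (measurableSet_intOO 0 c) (measurableSet_intOO x c) hsub ?_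
    refine rho_chi_zero ρ hρ c hcor _
      ((measurableSet_intOO 0 c).diff (measurableSet_intOO x c)) 0 q (le_refl 0) hq0
      (le_of_lt (lt_of_lt_of_le hq2 (le_of_lt hc1))) ?_ ?_
    · rintro t ⟨⟨ht0, htc⟩, htn⟩
      have htx : (t:ℝ) ≤ x := by
        by_contra h
        exact htn ⟨lt_of_not_ge h, htc⟩
      exact ⟨by push_cast; linarith, by push_cast; linarith⟩
    · rintro ⟨h1, h2⟩
      push_cast at h2
      linarith
  · intro y hcy hy1
    obtain ⟨q, hq1, hq2⟩ := exists_rat_btwn hcy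
    have hq0 : (0:ℚ) ≤ q := by
      have : (0:ℝ) < q := lt_trans hc0 hq1
      exact_mod_cast le_of_lt this
    have hq1' : q < 1 := by
      have : (q:ℝ) < 1 := lt_of_lt_of_le hq2 hy1
      exact_mod_cast this
    have hsub : intOO c y ⊆ intOO c 1 := fun t ht => ⟨ht.1, lt_of_lt_of_le ht.2 hy1⟩
    symm
    refine hsplit _ _ (measurableSet_intOO c 1) (measurableSet_intOO c y) hsub ?_
    refine rho_chi_zero ρ hρ c hcor _
      ((measurableSet_intOO c 1).diff (measurableSet_intOO c y)) q 1 hq0 hq1'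
      (by norm_num) ?_ ?_
    · rintro t ⟨⟨htc, ht1⟩, htn⟩
      have hty : y ≤ (t:ℝ) := by
        by_contra h
        exact htn ⟨htc, lt_of_not_ge h⟩
      exact ⟨by push_cast; linarith, by push_cast; linarith⟩
    · rintro ⟨h1, h2⟩
      push_cast at h1
      linarith
end

section
/- Let ρ be a linear lifting for L∞([0,1],Σ,μ), let c ∈ (0,1) be such that ρ(χ_{(x,y)})(c) = 1 for all reals 0 ≤ x < c < y ≤ 1. Let ⟨b_{0n} : n < ω⟩ be a strictly increasing sequence of rationals in (0,1) converging to c and ⟨b_{1n} : n < ω⟩ a strictly decreasing sequence of rationals in (0,1) converging to c. For a strictly increasing function f: ℕ → ℕ and k, m ∈ ℕ, set A^k_m(f) = ∪_{j<2} ∪_{ℓ ≥ k} (b_{j,f(4ℓ+m)}, b_{j,f(4ℓ+m+1)}), where for two reals a ≠ b, (a,b) denotes the open interval between them regardless of order. Let f*: ℕ → ℕ be strictly increasing, let f*₃(ℓ) = f*(3ℓ), and suppose that for some m < 4, ρ(χ_{A^0_m(f*₃)})(c) ≤ 1/4. Then for every m̄ < 4 and every k ∈ ℕ, there is a strictly increasing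 function g: ℕ → ℕ such that g(i) = i for all i < k and ρ(χ_{A^0_{m̄}(f* ∘ g)})(c) ≥ 3/4. -/
/-!
Write `e_j(n) = b_{j, f*(3n)}`. The set `A = A^0_m(f*₃)` contains every gap `(e_j(n), e_j(n+1))`
with `n ≡ m (mod 4)`. Choose `g`, fixing `0, …, k-1`, so that for `ℓ ≥ k` the `ℓ`-th interval of
`B = A^0_{m̄}(f* ∘ g)` is `(e_j(4ℓ+m+1), e_j(4ℓ+m+4))`, the union of the three other gaps of the
`ℓ`-th block. Then `A ∪ B` covers the interval `N = (e_0(4k+m), e_1(4k+m))` around `c` up to the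
countably many points `c`, `b_{j,n}`, so positivity and linearity of `ρ` give
`1 = ρ(χ_N)(c) ≤ ρ(χ_A)(c) + ρ(χ_B)(c) ≤ 1/4 + ρ(χ_B)(c)`.
-/

open MeasureTheory

/-- `A^k_m(f) = ⋃_{j<2} ⋃_{ℓ ≥ k} (b_{j,f(4ℓ+m)}, b_{j,f(4ℓ+m+1)})`, where for reals
`a ≠ b`, `(a,b)` denotes the open interval between them regardless of order (`Set.uIoo`). -/
def Ak (b : Fin 2 → ℕ → ℚ) (k m : ℕ) (f : ℕ → ℕ) : Set I01 :=
  ⋃ j : Fin 2, ⋃ ℓ : ℕ, ⋃ (_ : k ≤ ℓ),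
    {x : I01 | (x : ℝ) ∈ Set.uIoo ((b j (f (4*ℓ+m)) : ℝ)) ((b j (f (4*ℓ+m+1)) : ℝ))}

open Set Filter Topology

section Lifting

variable {Y : Type*} [MeasurableSpace Y]

theorem MemLinf.linear_comb {f g : Y → ℝ} (hf : MemLinf f) (hg : MemLinf g) (x y : ℝ) :
    MemLinf fun t => x * f t + y * g t := by
  obtain ⟨Mf, hMf⟩ := hf.2
  obtain ⟨Mg, hMg⟩ := hg.2
  refine ⟨(hf.1.const_mul x).add (hg.1.const_mul y), |x| * Mf + |y| * Mg, fun t => ?_⟩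
  calc |x * f t + y * g t| ≤ |x| * |f t| + |y| * |g t| := by
        simpa only [abs_mul] using abs_add_le (x * f t) (y * g t)
    _ ≤ |x| * Mf + |y| * Mg := by gcongr <;> simp only [hMf, hMg]

theorem memLinf_indicator_one {S : Set Y} (hS : MeasurableSet S) :
    MemLinf (S.indicator fun _ => (1 : ℝ)) :=
  ⟨measurable_const.indicator hS, 1, fun y => by by_cases h : y ∈ S <;> simp [h]⟩

variable {ν : Measure Y} {ρ : (Y → ℝ) → (Y → ℝ)}

theorem IsLinearLifting.mono (hρ : IsLinearLifting ν ρ) {f g : Y → ℝ} (hf : MemLinf f)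
    (hg : MemLinf g) (hfg : f ≤ᵐ[ν] g) (y : Y) : ρ f y ≤ ρ g y := by
  have h := hρ.nonneg _ (hg.linear_comb hf 1 (-1)) (hfg.mono fun t ht => by linarith) y
  rw [hρ.linear g f hg hf 1 (-1)] at h
  linarith

theorem IsLinearLifting.apply_indicator_le_add (hρ : IsLinearLifting ν ρ) {S T U : Set Y}
    (hS : MeasurableSet S) (hT : MeasurableSet T) (hU : MeasurableSet U)
    (hcov : ∀ᵐ y ∂ν, y ∈ S → y ∈ T ∨ y ∈ U) (y : Y) :
    ρ (S.indicator fun _ => 1) y ≤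
      ρ (T.indicator fun _ => 1) y + ρ (U.indicator fun _ => 1) y := by
  have hT' := memLinf_indicator_one hT
  have hU' := memLinf_indicator_one hU
  have h := hρ.mono (memLinf_indicator_one hS) (hT'.linear_comb hU' 1 1) (hcov.mono fun t ht => by
    by_cases hs : t ∈ S <;> by_cases htT : t ∈ T <;> by_cases htU : t ∈ U <;> simp_all) y
  rw [hρ.linear _ _ hT' hU' 1 1] at h
  simpa only [one_mul] using h

end Lifting

section Blocks

variable {α : Type*} [LinearOrder α] {u : ℕ → α}

theorem Monotone.exists_mem_Ico_succ (hu : Monotone u) {p N : ℕ} {x : α} (hpx : u p ≤ x)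
    (hxN : x < u N) : ∃ n, p ≤ n ∧ x ∈ Ico (u n) (u (n + 1)) := by
  induction N with
  | zero => exact absurd (hxN.trans_le (hu (Nat.zero_le p))) hpx.not_gt
  | succ N ih =>
    by_cases hN : x < u N
    · exact ih hN
    · refine ⟨N, ?_, le_of_not_gt hN, hxN⟩
      by_contra! hNp
      exact (hxN.trans_le (hu hNp)).not_ge hpx

theorem Monotone.exists_mem_Ico_block (hu : Monotone u) {d k m N : ℕ} (hd : 0 < d) {x : α}
    (hkx : u (d * k + m) ≤ x) (hxN : x < u N) :
    ∃ ℓ ≥ k, x ∈ Ico (u (d * ℓ + m)) (u (d * ℓ + m + 1)) ∨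
      x ∈ Ico (u (d * ℓ + m + 1)) (u (d * ℓ + m + d)) := by
  obtain ⟨n, hn, hxn⟩ := hu.exists_mem_Ico_succ hkx hxN
  have hℓ : d * ((n - m) / d) + m ≤ n ∧ n < d * ((n - m) / d) + m + d := by
    have := Nat.div_add_mod (n - m) d
    have := Nat.mod_lt (n - m) hd
    omega
  have hkℓ : k ≤ (n - m) / d := (Nat.le_div_iff_mul_le hd).2 (by rw [mul_comm]; omega)
  refine ⟨(n - m) / d, hkℓ, ?_⟩
  rcases hℓ.1.eq_or_lt with h | h
  · exact Or.inl (by rwa [h])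
  · exact Or.inr ⟨(hu h).trans hxn.1, hxn.2.trans_le (hu hℓ.2)⟩

theorem Monotone.exists_mem_uIoo_block (hu : Monotone u) {d k m N : ℕ} (hd : 0 < d) {x : α}
    (hkx : u (d * k + m) ≤ x) (hxN : x < u N) (hx : x ∉ range u) :
    ∃ ℓ ≥ k, x ∈ uIoo (u (d * ℓ + m)) (u (d * ℓ + m + 1)) ∨
      x ∈ uIoo (u (d * ℓ + m + 1)) (u (d * ℓ + m + d)) := by
  obtain ⟨ℓ, hℓ, h⟩ := hu.exists_mem_Ico_block hd hkx hxN
  have key : ∀ {a b}, x ∈ Ico (u a) (u b) → x ∈ uIoo (u a) (u b) := fun h =>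
    mem_uIoo_of_lt (h.1.lt_of_ne fun e => hx ⟨_, e⟩) h.2
  exact ⟨ℓ, hℓ, h.imp key key⟩

theorem Antitone.exists_mem_uIoo_block (hu : Antitone u) {d k m N : ℕ} (hd : 0 < d) {x : α}
    (hkx : x ≤ u (d * k + m)) (hxN : u N < x) (hx : x ∉ range u) :
    ∃ ℓ ≥ k, x ∈ uIoo (u (d * ℓ + m)) (u (d * ℓ + m + 1)) ∨
      x ∈ uIoo (u (d * ℓ + m + 1)) (u (d * ℓ + m + d)) := by
  simpa only [Function.comp_apply, uIoo_toDual, mem_preimage, OrderDual.ofDual_toDual] using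
    hu.dual_right.exists_mem_uIoo_block (x := OrderDual.toDual x) hd hkx hxN
      (by simpa only [range_comp, mem_image, EmbeddingLike.apply_eq_iff_eq, exists_eq_right])

end Blocks

section Reindexing

/-- For `ℓ ≥ k` it maps `4ℓ + m̄ + r`, `r = 0, 1, 2, 3`, to `3(4ℓ + m + 1) + 0, 9, 10, 11`. -/
def blockReindex (k m mbar n : ℕ) : ℕ :=
  if n < 4 * k + mbar then n
  else 12 * ((n - mbar) / 4) + 3 * m + 3 + if (n - mbar) % 4 = 0 then 0 else (n - mbar) % 4 + 8

variable {k m mbar : ℕ}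

theorem blockReindex_strictMono (hmbar : mbar < 4) : StrictMono (blockReindex k m mbar) := by
  refine strictMono_nat_of_lt_succ fun n => ?_
  unfold blockReindex
  split_ifs <;> omega

theorem blockReindex_of_lt {n : ℕ} (hn : n < 4 * k + mbar) : blockReindex k m mbar n = n :=
  if_pos hn

theorem blockReindex_block_start {ℓ : ℕ} (hℓ : k ≤ ℓ) :
    blockReindex k m mbar (4 * ℓ + mbar) = 3 * (4 * ℓ + m + 1) := by
  unfold blockReindex
  split_ifs <;> omega

theorem blockReindex_block_next {ℓ : ℕ} (hℓ : k ≤ ℓ) :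
    blockReindex k m mbar (4 * ℓ + mbar + 1) = 3 * (4 * ℓ + m + 4) := by
  unfold blockReindex
  split_ifs <;> omega

end Reindexing

section Covering

variable {b : Fin 2 → ℕ → ℚ} {f h : ℕ → ℕ} {k m mbar : ℕ}

theorem mem_Ak_iff {x : I01} :
    x ∈ Ak b k m f ↔
      ∃ j ℓ, k ≤ ℓ ∧ (x : ℝ) ∈ uIoo (b j (f (4 * ℓ + m)) : ℝ) (b j (f (4 * ℓ + m + 1))) := by
  simp [Ak]

theorem measurableSet_Ak : MeasurableSet (Ak b k m f) :=
  .iUnion fun _ => .iUnion fun _ => .iUnion fun _ => measurable_subtype_coe measurableSet_Ioo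

theorem measurableSet_intOO_s13 (x y : ℝ) : MeasurableSet (intOO x y) :=
  measurable_subtype_coe measurableSet_Ioo

theorem mem_Ak_union_of_mem_block (hstart : ∀ ℓ ≥ k, h (4 * ℓ + mbar) = f (4 * ℓ + m + 1))
    (hnext : ∀ ℓ ≥ k, h (4 * ℓ + mbar + 1) = f (4 * ℓ + m + 4)) {x : I01} (j : Fin 2) {ℓ : ℕ}
    (hℓ : k ≤ ℓ)
    (hx : (x : ℝ) ∈ uIoo (b j (f (4 * ℓ + m)) : ℝ) (b j (f (4 * ℓ + m + 1))) ∨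
      (x : ℝ) ∈ uIoo (b j (f (4 * ℓ + m + 1)) : ℝ) (b j (f (4 * ℓ + m + 4)))) :
    x ∈ Ak b 0 m f ∨ x ∈ Ak b 0 mbar h := by
  rcases hx with hx | hx
  · exact Or.inl (mem_Ak_iff.2 ⟨j, ℓ, Nat.zero_le ℓ, hx⟩)
  · exact Or.inr (mem_Ak_iff.2 ⟨j, ℓ, Nat.zero_le ℓ, by rwa [hstart ℓ hℓ, hnext ℓ hℓ]⟩)

theorem ae_mem_Ak_union_of_mem_intOO {c : ℝ} (hb0 : Monotone fun n => (b 0 (f n) : ℝ))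
    (hb1 : Antitone fun n => (b 1 (f n) : ℝ))
    (hb0lim : Tendsto (fun n => (b 0 (f n) : ℝ)) atTop (𝓝 c))
    (hb1lim : Tendsto (fun n => (b 1 (f n) : ℝ)) atTop (𝓝 c))
    (hstart : ∀ ℓ ≥ k, h (4 * ℓ + mbar) = f (4 * ℓ + m + 1))
    (hnext : ∀ ℓ ≥ k, h (4 * ℓ + mbar + 1) = f (4 * ℓ + m + 4)) :
    ∀ᵐ x ∂(volume : Measure I01), x ∈ intOO (b 0 (f (4 * k + m))) (b 1 (f (4 * k + m))) →
      x ∈ Ak b 0 m f ∨ x ∈ Ak b 0 mbar h := by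
  have hE : (Subtype.val ⁻¹' insert c (⋃ j, range fun n => (b j n : ℝ)) : Set I01).Countable :=
    ((countable_iUnion fun _ => countable_range _).insert _).preimage Subtype.val_injective
  filter_upwards [hE.ae_notMem volume] with x hxE hx
  simp only [mem_preimage, mem_insert_iff, mem_iUnion, mem_range, not_or, not_exists] at hxE
  obtain ⟨hxc, hxb⟩ := hxE
  rcases Ne.lt_or_gt hxc with hlt | hgt
  · obtain ⟨N, hN⟩ := (hb0lim.eventually (eventually_gt_nhds hlt)).exists
    obtain ⟨ℓ, hℓ, hmem⟩ := hb0.exists_mem_uIoo_block four_pos hx.1.le hN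
      fun ⟨n, hn⟩ => hxb 0 (f n) hn
    exact mem_Ak_union_of_mem_block hstart hnext 0 hℓ hmem
  · obtain ⟨N, hN⟩ := (hb1lim.eventually (eventually_lt_nhds hgt)).exists
    obtain ⟨ℓ, hℓ, hmem⟩ := hb1.exists_mem_uIoo_block four_pos hx.2.le hN
      fun ⟨n, hn⟩ => hxb 1 (f n) hn
    exact mem_Ak_union_of_mem_block hstart hnext 1 hℓ hmem

end Covering

theorem exists_reindexing_large_general (ρ : (I01 → ℝ) → (I01 → ℝ))
    (hρ : IsLinearLifting (volume : Measure I01) ρ)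
    (c : I01)
    (hone : ∀ x y : ℝ, 0 ≤ x → x < (c : ℝ) → (c : ℝ) < y → y ≤ 1 →
      ρ (chi (intOO x y)) c = 1)
    (b : Fin 2 → ℕ → ℚ)
    (hbmem : ∀ j n, 0 < b j n ∧ b j n < 1)
    (hb0 : StrictMono (b 0)) (hb1 : StrictAnti (b 1))
    (hb0lim : Filter.Tendsto (fun n => ((b 0 n : ℝ))) Filter.atTop (nhds (c : ℝ)))
    (hb1lim : Filter.Tendsto (fun n => ((b 1 n : ℝ))) Filter.atTop (nhds (c : ℝ)))
    (fstar : ℕ → ℕ) (hf : StrictMono fstar)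
    (hsmall : ∃ m < 4, ρ (chi (Ak b 0 m (fun ℓ => fstar (3*ℓ)))) c ≤ 1/4) :
    ∀ mbar < 4, ∀ k : ℕ, ∃ g : ℕ → ℕ, StrictMono g ∧ (∀ i < k, g i = i) ∧
      ρ (chi (Ak b 0 mbar (fstar ∘ g))) c ≥ 3/4 := by
  intro mbar hmbar k
  obtain ⟨m, -, hsm⟩ := hsmall
  set f3 : ℕ → ℕ := fun ℓ => fstar (3 * ℓ)
  have hf3 : StrictMono f3 := hf.comp (strictMono_mul_left_of_pos three_pos)
  have hb0' : StrictMono fun n => (b 0 n : ℝ) := Rat.cast_strictMono.comp hb0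
  have hb1' : StrictAnti fun n => (b 1 n : ℝ) := Rat.cast_strictMono.comp_strictAnti hb1
  set g := blockReindex k m mbar
  refine ⟨g, blockReindex_strictMono hmbar, fun i hi => blockReindex_of_lt (by omega), ?_⟩
  set N := intOO (b 0 (f3 (4 * k + m))) (b 1 (f3 (4 * k + m)))
  have hcov := ae_mem_Ak_union_of_mem_intOO (f := f3) (h := fstar ∘ g)
    (hb0'.monotone.comp hf3.monotone) (hb1'.antitone.comp_monotone hf3.monotone)
    (hb0lim.comp hf3.tendsto_atTop) (hb1lim.comp hf3.tendsto_atTop)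
    (fun ℓ hℓ => congrArg fstar (blockReindex_block_start hℓ))
    (fun ℓ hℓ => congrArg fstar (blockReindex_block_next hℓ))
  have hN : ρ (chi N) c = 1 :=
    hone _ _ (by exact_mod_cast (hbmem 0 _).1.le)
      ((hb0' (Nat.lt_succ_self _)).trans_le (hb0'.monotone.ge_of_tendsto hb0lim _))
      ((hb1'.antitone.le_of_tendsto hb1lim _).trans_lt (hb1' (Nat.lt_succ_self _)))
      (by exact_mod_cast (hbmem 1 _).2.le)
  have hle : ρ (chi N) c ≤ ρ (chi (Ak b 0 m f3)) c + ρ (chi (Ak b 0 mbar (fstar ∘ g))) c :=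
    hρ.apply_indicator_le_add (measurableSet_intOO_s13 _ _) measurableSet_Ak measurableSet_Ak hcov c
  linarith

/-- Claim 2.6 of the paper: if some quarter `A^0_m(f*₃)` has `ρ`-value ≤ 1/4 at `c`, then
for any `m̄ < 4` and `k` there is a strictly increasing `g` fixing `0,…,k-1` with
`ρ(χ_{A^0_{m̄}(f* ∘ g)})(c) ≥ 3/4`. -/
theorem exists_reindexing_large (ρ : (I01 → ℝ) → (I01 → ℝ))
    (hρ : IsLinearLifting (volume : Measure I01) ρ)
    (c : I01) (hc0 : 0 < (c : ℝ)) (hc1 : (c : ℝ) < 1)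
    (hone : ∀ x y : ℝ, 0 ≤ x → x < (c : ℝ) → (c : ℝ) < y → y ≤ 1 →
      ρ (chi (intOO x y)) c = 1)
    (b : Fin 2 → ℕ → ℚ)
    (hbmem : ∀ j n, 0 < b j n ∧ b j n < 1)
    (hb0 : StrictMono (b 0)) (hb1 : StrictAnti (b 1))
    (hb0lim : Filter.Tendsto (fun n => ((b 0 n : ℝ))) Filter.atTop (nhds (c : ℝ)))
    (hb1lim : Filter.Tendsto (fun n => ((b 1 n : ℝ))) Filter.atTop (nhds (c : ℝ)))
    (fstar : ℕ → ℕ) (hf : StrictMono fstar)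
    (hsmall : ∃ m < 4, ρ (chi (Ak b 0 m (fun ℓ => fstar (3*ℓ)))) c ≤ 1/4) :
    ∀ mbar < 4, ∀ k : ℕ, ∃ g : ℕ → ℕ, StrictMono g ∧ (∀ i < k, g i = i) ∧
      ρ (chi (Ak b 0 mbar (fstar ∘ g))) c ≥ 3/4 :=
  exists_reindexing_large_general ρ hρ c hone b hbmem hb0 hb1 hb0lim hb1lim fstar hf hsmall
end

section
/- Let ⟨ā^α : α ∈ Λ⟩ be a countable family of elements of S with pairwise distinct limit points a^α_ω, and let P = P(⟨ā^α : α ∈ Λ⟩) be the associated partial order. Suppose r ∈ P, J ⊆ P is dense in P (every element of P has an extension in J), (c₀, c₁) ⊆ (0,1) is an interval with (c₀, c₁) ∩ U_r = ∅. Then μ( (c₀, c₁) ∩ ⋂ { cl(U_{r₁}) : r₁ ∈ J, r₁ ≥ r } ) = 0, where μ is Lebesgue measure and cl denotes topological closure. -/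
open MeasureTheory

/-- An element of `S`: a triple `(⟨a_{0i}⟩, ⟨a_{1i}⟩, a_ω)` where the `a_{ji}` are rationals
in `(0,1)`, `a_ω` is irrational, `⟨a_{0i}⟩` is strictly increasing converging to `a_ω`, and
`⟨a_{1i}⟩` is strictly decreasing converging to `a_ω`. -/
structure SElem where
  a : Fin 2 → ℕ → ℚ
  limit : ℝ
  mem : ∀ j n, 0 < a j n ∧ a j n < 1
  irr : Irrational limit
  inc : StrictMono (a 0)
  dec : StrictAnti (a 1)
  tendsto : ∀ j, Filter.Tendsto (fun n => ((a j n : ℝ))) Filter.atTop (nhds limit)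

/-- Membership in the poset `P(⟨ā^α : α ∈ Λ⟩)`: conditions (a), (b), (c) on a pair
`p = (U_p, f_p)` (the function `f_p : U_p → {0,1}` is encoded as a total function
`ℝ → Fin 2` whose values matter only on `U_p`). -/
def PCond {Λ : Type*} (A : Λ → SElem) (U : Set ℝ) (f : ℝ → Fin 2) : Prop :=
  -- (a) `U` is an open subset of `(0,1)` and `cl(U)` has measure `< 1/2`
  IsOpen U ∧ U ⊆ Set.Ioo 0 1 ∧ volume (closure U) < 1/2 ∧
  -- (b) there are rationals `0 = b₀ < b₁ < … < b_n = 1` with `U = ⋃_{ℓ<n} I_ℓ`,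
  -- `cl(I_ℓ) ⊆ (b_ℓ, b_{ℓ+1})`
  ∃ (n : ℕ) (b : ℕ → ℚ) (I : ℕ → Set ℝ),
    b 0 = 0 ∧ b n = 1 ∧ (∀ ℓ < n, b ℓ < b (ℓ+1)) ∧
    U = ⋃ ℓ ∈ Finset.range n, I ℓ ∧
    (∀ ℓ < n, closure (I ℓ) ⊆ Set.Ioo ((b ℓ : ℝ)) ((b (ℓ+1) : ℝ))) ∧
    -- (c) each `I_ℓ` is a rational interval on which `f` is constant, or comes from some `ā^α`
    (∀ ℓ < n,
      (∃ q r : ℚ, I ℓ = Set.Ioo (q : ℝ) (r : ℝ) ∧ ∃ k : Fin 2, ∀ t ∈ I ℓ, f t = k) ∨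
      (∃ (α : Λ) (n₀ : ℕ),
        (I ℓ = ⋃ j : Fin 2, ⋃ m : ℕ, ⋃ (_ : n₀ ≤ m),
          Set.uIoo (((A α).a j (2*m) : ℝ)) (((A α).a j (2*m+1) : ℝ))) ∧
        (∀ j k : Fin 2, ∀ m : ℕ, n₀ ≤ 2*m + (k : ℕ) →
          ∀ t ∈ Set.uIoo (((A α).a j (4*m+2*(k : ℕ)) : ℝ))
              (((A α).a j (4*m+2*(k : ℕ)+1) : ℝ)),
            f t = k)))

/-- The order on `P`: `p ≤ q` iff `U_p ⊆ U_q`, `f_p ⊆ f_q`, and `cl(U_p) ∩ U_q = U_p`. -/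
def PLe (p q : Set ℝ × (ℝ → Fin 2)) : Prop :=
  p.1 ⊆ q.1 ∧ (∀ t ∈ p.1, p.2 t = q.2 t) ∧ closure p.1 ∩ q.1 = p.1

namespace Fact28

open Set

/-! ### Basic SElem facts -/

theorem _root_.SElem.a_lt_limit (E : SElem) (i : ℕ) : (E.a 0 i : ℝ) < E.limit := by
  have h1 : (E.a 0 i : ℝ) < (E.a 0 (i+1) : ℝ) := by exact_mod_cast E.inc (Nat.lt_succ_self i)
  have h2 : (E.a 0 (i+1) : ℝ) ≤ E.limit := by
    refine ge_of_tendsto (E.tendsto 0) ?_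
    filter_upwards [Filter.eventually_ge_atTop (i+1)] with n hn
    exact_mod_cast E.inc.monotone hn
  linarith

theorem _root_.SElem.limit_lt_a (E : SElem) (i : ℕ) : E.limit < (E.a 1 i : ℝ) := by
  have h1 : (E.a 1 (i+1) : ℝ) < (E.a 1 i : ℝ) := by exact_mod_cast E.dec (Nat.lt_succ_self i)
  have h2 : E.limit ≤ (E.a 1 (i+1) : ℝ) := by
    refine le_of_tendsto (E.tendsto 1) ?_
    filter_upwards [Filter.eventually_ge_atTop (i+1)] with n hn
    exact_mod_cast E.dec.antitone hn
  linarith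

/-! ### Components and cell decompositions as lists -/

variable {Λ : Type*} (A : Λ → SElem)

/-- the (c) disjunct for a single component -/
def Comp (f : ℝ → Fin 2) (X : Set ℝ) : Prop :=
  (∃ q r : ℚ, X = Set.Ioo (q : ℝ) (r : ℝ) ∧ ∃ k : Fin 2, ∀ t ∈ X, f t = k) ∨
  (∃ (α : Λ) (n₀ : ℕ),
    (X = ⋃ j : Fin 2, ⋃ m : ℕ, ⋃ (_ : n₀ ≤ m),
      Set.uIoo (((A α).a j (2*m) : ℝ)) (((A α).a j (2*m+1) : ℝ))) ∧
    (∀ j k : Fin 2, ∀ m : ℕ, n₀ ≤ 2*m + (k : ℕ) →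
      ∀ t ∈ Set.uIoo (((A α).a j (4*m+2*(k : ℕ)) : ℝ))
          (((A α).a j (4*m+2*(k : ℕ)+1) : ℝ)),
        f t = k))

/-- head wall of a cell list, with default -/
def hw (L : List (ℚ × Set ℝ)) (y : ℚ) : ℚ :=
  match L with
  | [] => y
  | (w, _) :: _ => w

@[simp] theorem hw_nil (y : ℚ) : hw [] y = y := rfl
@[simp] theorem hw_cons (w : ℚ) (X : Set ℝ) (T : List (ℚ × Set ℝ)) (y : ℚ) :
    hw ((w, X) :: T) y = w := rfl

/-- union of the components of a cell list -/
def lU : List (ℚ × Set ℝ) → Set ℝ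
  | [] => ∅
  | (_, X) :: T => X ∪ lU T

@[simp] theorem lU_nil : lU [] = ∅ := rfl
@[simp] theorem lU_cons (w : ℚ) (X : Set ℝ) (T : List (ℚ × Set ℝ)) :
    lU ((w, X) :: T) = X ∪ lU T := rfl

/-- `Cells x L y` : `L` is a valid sequence of cells-with-components spanning `(x,y)`. -/
def Cells (f : ℝ → Fin 2) : ℚ → List (ℚ × Set ℝ) → ℚ → Prop
  | x, [], y => x = y
  | x, (w, X) :: T, y => x = w ∧ x < hw T y ∧
      closure X ⊆ Set.Ioo (x : ℝ) ((hw T y : ℚ) : ℝ) ∧ Comp A f X ∧ Cells f (hw T y) T y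

theorem cells_hw {f x L y} (h : Cells A f x L y) : hw L y = x := by
  cases L with
  | nil => exact h.symm
  | cons p T => obtain ⟨p1, p2⟩ := p; exact h.1.symm

theorem hw_append (L T : List (ℚ × Set ℝ)) (y : ℚ) :
    hw (L ++ T) y = hw L (hw T y) := by
  cases L with
  | nil => rfl
  | cons p L' => obtain ⟨w, X⟩ := p; rfl

theorem cells_append {f} {L₁ L₂ : List (ℚ × Set ℝ)} {x z y : ℚ}
    (h₁ : Cells A f x L₁ z) (h₂ : Cells A f z L₂ y) :
    Cells A f x (L₁ ++ L₂) y := by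
  induction L₁ generalizing x with
  | nil =>
    have hx : x = z := h₁
    subst hx
    simpa using h₂
  | cons p T ih =>
    obtain ⟨w, X⟩ := p
    obtain ⟨rfl, hlt, hcl, hcomp, htail⟩ := h₁
    have hhw : hw (T.append L₂) y = hw T z := by
      rw [show T.append L₂ = T ++ L₂ from rfl, hw_append, cells_hw A h₂]
    refine ⟨rfl, ?_, ?_, hcomp, ?_⟩
    · rw [hhw]; exact hlt
    · rw [hhw]; exact hcl
    · rw [hhw]; exact ih htail

theorem lU_append (L T : List (ℚ × Set ℝ)) : lU (L ++ T) = lU L ∪ lU T := by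
  induction L with
  | nil => simp
  | cons p L' ih => obtain ⟨w, X⟩ := p; simp [ih, Set.union_assoc]

theorem cells_x_lt_y {f x L y} (h : Cells A f x L y) (hne : L ≠ []) : x < y := by
  induction L generalizing x with
  | nil => exact absurd rfl hne
  | cons p T ih =>
    obtain ⟨w, X⟩ := p
    obtain ⟨rfl, hlt, _, _, htail⟩ := h
    cases T with
    | nil => simpa [hw] using hlt
    | cons q T' =>
      exact lt_trans hlt (ih htail (by simp))

end Fact28

namespace Fact28
open Set
variable {Λ : Type*} (A : Λ → SElem)

theorem biUnion_range_succ (g : ℕ → Set ℝ) (n : ℕ) :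
    ⋃ ℓ ∈ Finset.range (n+1), g ℓ = g 0 ∪ ⋃ ℓ ∈ Finset.range n, g (ℓ+1) := by
  ext t
  simp only [Set.mem_iUnion, Finset.mem_range, Set.mem_union]
  constructor
  · rintro ⟨ℓ, hℓ, ht⟩
    cases ℓ with
    | zero => exact Or.inl ht
    | succ m => exact Or.inr ⟨m, by omega, ht⟩
  · rintro (ht | ⟨m, hm, ht⟩)
    · exact ⟨0, by omega, ht⟩
    · exact ⟨m+1, by omega, ht⟩

theorem lU_getD (L : List (ℚ × Set ℝ)) :
    ⋃ ℓ ∈ Finset.range L.length, (L.getD ℓ ((0:ℚ), (∅ : Set ℝ))).2 = lU L := by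
  induction L with
  | nil => simp
  | cons p T ih =>
    obtain ⟨w, X⟩ := p
    rw [List.length_cons, biUnion_range_succ]
    simp only [List.getD_cons_zero, List.getD_cons_succ, lU_cons]
    rw [ih]

theorem cells_facts {f : ℝ → Fin 2} :
    ∀ (L : List (ℚ × Set ℝ)) (x y : ℚ), Cells A f x L y →
    ∀ ℓ < L.length, hw (L.drop (ℓ+1)) y ∈ Set.Ioi (hw (L.drop ℓ) y) ∧
      closure (L.getD ℓ ((0:ℚ), (∅ : Set ℝ))).2 ⊆
        Set.Ioo ((hw (L.drop ℓ) y : ℚ) : ℝ) ((hw (L.drop (ℓ+1)) y : ℚ) : ℝ) ∧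
      Comp A f (L.getD ℓ (0, ∅)).2 := by
  intro L
  induction L with
  | nil => intro x y h ℓ hℓ; simp at hℓ
  | cons p T ih =>
    obtain ⟨w, X⟩ := p
    intro x y h ℓ hℓ
    obtain ⟨rfl, hlt, hcl, hcomp, htail⟩ := h
    cases ℓ with
    | zero =>
      refine ⟨?_, ?_, ?_⟩
      · simpa using hlt
      · simpa using hcl
      · simpa using hcomp
    | succ m =>
      have hm : m < T.length := by simpa using hℓ
      exact ih _ _ htail m hm

theorem pcond_of_cells {f : ℝ → Fin 2} {L : List (ℚ × Set ℝ)} (hL : Cells A f 0 L 1)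
    {U : Set ℝ} (hU : U = lU L) (ho : IsOpen U) (hsub : U ⊆ Set.Ioo 0 1)
    (hm : volume (closure U) < 1/2) : PCond A U f := by
  refine ⟨ho, hsub, hm, L.length, fun ℓ => hw (L.drop ℓ) 1,
    fun ℓ => (L.getD ℓ ((0:ℚ), (∅ : Set ℝ))).2, ?_, ?_, ?_, ?_, ?_, ?_⟩
  · simpa using cells_hw A hL
  · simp
  · intro ℓ hℓ
    exact (cells_facts A L 0 1 hL ℓ hℓ).1
  · rw [hU, lU_getD]
  · intro ℓ hℓ
    exact (cells_facts A L 0 1 hL ℓ hℓ).2.1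
  · intro ℓ hℓ
    exact (cells_facts A L 0 1 hL ℓ hℓ).2.2

theorem cells_of_data {f : ℝ → Fin 2} (n : ℕ) (b : ℕ → ℚ) (I : ℕ → Set ℝ)
    (hbn : b n = 1)
    (hinc : ∀ ℓ < n, b ℓ < b (ℓ+1))
    (hcl : ∀ ℓ < n, closure (I ℓ) ⊆ Set.Ioo ((b ℓ : ℝ)) ((b (ℓ+1) : ℝ)))
    (hcomp : ∀ ℓ < n, Comp A f (I ℓ)) :
    ∀ k i, i + k = n →
      Cells A f (b i) ((List.range k).map (fun j => (b (i+j), I (i+j)))) 1 := by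
  intro k
  induction k with
  | zero =>
    intro i hi
    have hin : i = n := by omega
    show b i = 1
    rw [hin, hbn]
  | succ k ih =>
    intro i hi
    rw [List.range_succ_eq_map]
    simp only [List.map_cons, List.map_map]
    have htail_eq : (List.range k).map ((fun j => (b (i+j), I (i+j))) ∘ Nat.succ) =
        (List.range k).map (fun j => (b ((i+1)+j), I ((i+1)+j))) := by
      apply List.map_congr_left
      intro j hj
      have hij : i + (j+1) = (i+1)+j := by omega
      simp only [Function.comp]
      rw [show Nat.succ j = j + 1 from rfl, hij]
    rw [htail_eq]
    have hhw : hw ((List.range k).map (fun j => (b ((i+1)+j), I ((i+1)+j)))) 1 = b (i+1) := by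
      cases k with
      | zero => simp only [List.range_zero, List.map_nil, hw_nil]; rw [show i+1 = n by omega, hbn]
      | succ k' =>
        rw [List.range_succ_eq_map]
        simp [hw]
    refine ⟨by simp, ?_, ?_, ?_, ?_⟩
    · rw [hhw]; simpa using hinc i (by omega)
    · rw [hhw]; simpa using hcl i (by omega)
    · simpa using hcomp i (by omega)
    · rw [hhw]; exact ih (i+1) (by omega)

theorem lU_map_range (b : ℕ → ℚ) (I : ℕ → Set ℝ) :
    ∀ (k i : ℕ), lU ((List.range k).map (fun j => (b (i+j), I (i+j)))) =
      ⋃ j ∈ Finset.range k, I (i+j) := by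
  intro k
  induction k with
  | zero => intro i; simp
  | succ k ih =>
    intro i
    rw [List.range_succ_eq_map]
    simp only [List.map_cons, List.map_map, lU_cons]
    have htail_eq : (List.range k).map ((fun j => (b (i+j), I (i+j))) ∘ Nat.succ) =
        (List.range k).map (fun j => (b ((i+1)+j), I ((i+1)+j))) := by
      apply List.map_congr_left
      intro j hj
      have hij : i + (j+1) = (i+1)+j := by omega
      simp only [Function.comp]
      rw [show Nat.succ j = j + 1 from rfl, hij]
    have h2 : (⋃ j ∈ Finset.range k, I ((i+1)+j)) = ⋃ j ∈ Finset.range k, I (i+(j+1)) := by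
      apply Set.iUnion₂_congr
      intro j hj
      rw [show (i+1)+j = i+(j+1) from by omega]
    rw [htail_eq, ih (i+1), h2, biUnion_range_succ]

theorem cells_of_pcond {U : Set ℝ} {f : ℝ → Fin 2} (h : PCond A U f) :
    ∃ L, Cells A f 0 L 1 ∧ lU L = U := by
  obtain ⟨ho, hsub, hm, n, b, I, hb0, hbn, hinc, hUeq, hcl, hcomp⟩ := h
  refine ⟨(List.range n).map (fun j => (b (0+j), I (0+j))), ?_, ?_⟩
  · have := cells_of_data A n b I hbn hinc hcl hcomp n 0 (by omega)
    rwa [hb0] at this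
  · rw [lU_map_range, hUeq]
    apply Set.iUnion₂_congr
    intro j hj
    rw [Nat.zero_add]

end Fact28

namespace Fact28
open Set
variable {Λ : Type*} (A : Λ → SElem)

/-! ### The α-structure sets -/

/-- the set appearing in the second disjunct of (c) -/
def AStr (E : SElem) (n₀ : ℕ) : Set ℝ :=
  ⋃ j : Fin 2, ⋃ m : ℕ, ⋃ (_ : n₀ ≤ m),
    Set.uIoo ((E.a j (2*m) : ℝ)) ((E.a j (2*m+1) : ℝ))

theorem uIoo_j0 (E : SElem) (m : ℕ) :
    Set.uIoo ((E.a 0 (2*m) : ℝ)) ((E.a 0 (2*m+1) : ℝ)) =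
      Set.Ioo ((E.a 0 (2*m) : ℝ)) ((E.a 0 (2*m+1) : ℝ)) := by
  apply Set.uIoo_of_lt
  exact_mod_cast E.inc (by omega : 2*m < 2*m+1)

theorem uIoo_j1 (E : SElem) (m : ℕ) :
    Set.uIoo ((E.a 1 (2*m) : ℝ)) ((E.a 1 (2*m+1) : ℝ)) =
      Set.Ioo ((E.a 1 (2*m+1) : ℝ)) ((E.a 1 (2*m) : ℝ)) := by
  apply Set.uIoo_of_gt
  exact_mod_cast E.dec (by omega : 2*m < 2*m+1)

theorem mem_astr_bounds (E : SElem) (M : ℕ) {t : ℝ} (ht : t ∈ AStr E M) :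
    (E.a 0 (2*M) : ℝ) ≤ t ∧ t ≤ (E.a 1 (2*M) : ℝ) := by
  simp only [AStr, Set.mem_iUnion] at ht
  obtain ⟨j, m, hm, ht⟩ := ht
  fin_cases j
  · have ht' : t ∈ Set.uIoo ((E.a 0 (2*m) : ℝ)) ((E.a 0 (2*m+1) : ℝ)) := ht
    rw [uIoo_j0] at ht'
    constructor
    · have : (E.a 0 (2*M) : ℝ) ≤ (E.a 0 (2*m) : ℝ) := by
        exact_mod_cast E.inc.monotone (by omega : 2*M ≤ 2*m)
      linarith [ht'.1]
    · have h1 : (E.a 0 (2*m+1) : ℝ) < E.limit := E.a_lt_limit _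
      have h2 : E.limit < (E.a 1 (2*M) : ℝ) := E.limit_lt_a _
      linarith [ht'.2]
  · have ht' : t ∈ Set.uIoo ((E.a 1 (2*m) : ℝ)) ((E.a 1 (2*m+1) : ℝ)) := ht
    rw [uIoo_j1] at ht'
    constructor
    · have h1 : (E.a 0 (2*M) : ℝ) < E.limit := E.a_lt_limit _
      have h2 : E.limit < (E.a 1 (2*m+1) : ℝ) := E.limit_lt_a _
      linarith [ht'.1]
    · have : (E.a 1 (2*m) : ℝ) ≤ (E.a 1 (2*M) : ℝ) := by
        exact_mod_cast E.dec.antitone (by omega : 2*M ≤ 2*m)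
      linarith [ht'.2]

theorem astr_nonempty (E : SElem) (n₀ : ℕ) : (AStr E n₀).Nonempty := by
  have h : (E.a 0 (2*n₀) : ℝ) < (E.a 0 (2*n₀+1) : ℝ) := by
    exact_mod_cast E.inc (by omega : 2*n₀ < 2*n₀+1)
  obtain ⟨t, ht⟩ := Set.nonempty_Ioo.2 h
  exact ⟨t, Set.mem_iUnion.2 ⟨0, Set.mem_iUnion.2 ⟨n₀, Set.mem_iUnion.2
    ⟨le_refl n₀, (uIoo_j0 E n₀) ▸ ht⟩⟩⟩⟩

theorem ioo_subset_astr (E : SElem) {n₀ m : ℕ} (j : Fin 2) (hm : n₀ ≤ m) :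
    Set.uIoo ((E.a j (2*m) : ℝ)) ((E.a j (2*m+1) : ℝ)) ⊆ AStr E n₀ :=
  fun t ht => Set.mem_iUnion.2 ⟨j, Set.mem_iUnion.2 ⟨m, Set.mem_iUnion.2 ⟨hm, ht⟩⟩⟩

theorem limit_mem_closure_astr (E : SElem) (n₀ : ℕ) :
    E.limit ∈ closure (AStr E n₀) := by
  have hseq : Filter.Tendsto (fun m => (E.a 0 (2*(n₀+m)) : ℝ)) Filter.atTop (nhds E.limit) := by
    exact (E.tendsto 0).comp
      (Filter.tendsto_atTop_mono (fun m => by omega : ∀ m, m ≤ 2*(n₀+m)) Filter.tendsto_id)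
  refine isClosed_closure.mem_of_tendsto hseq ?_
  filter_upwards with m
  have hlt : (E.a 0 (2*(n₀+m)) : ℝ) < (E.a 0 (2*(n₀+m)+1) : ℝ) := by
    exact_mod_cast E.inc (by omega : 2*(n₀+m) < 2*(n₀+m)+1)
  have : (E.a 0 (2*(n₀+m)) : ℝ) ∈ closure (Set.Ioo ((E.a 0 (2*(n₀+m)) : ℝ)) ((E.a 0 (2*(n₀+m)+1) : ℝ))) := by
    rw [closure_Ioo hlt.ne]
    exact ⟨le_refl _, hlt.le⟩
  refine closure_mono ?_ this
  rw [← uIoo_j0]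
  exact ioo_subset_astr E 0 (by omega)

/-- countable "skeleton": limit point plus all endpoints -/
def Skel (E : SElem) : Set ℝ := {E.limit} ∪ ⋃ j : Fin 2, ⋃ i : ℕ, {((E.a j i : ℝ))}

theorem skel_countable (E : SElem) : (Skel E).Countable := by
  apply Set.Countable.union (Set.countable_singleton _)
  exact Set.countable_iUnion (fun j => Set.countable_iUnion (fun i => Set.countable_singleton _))

theorem astr_closure_subset (E : SElem) (n₀ : ℕ) :
    closure (AStr E n₀) ⊆ AStr E n₀ ∪ Skel E := by
  set C : Set ℝ := {E.limit} ∪ ⋃ j : Fin 2, ⋃ m : ℕ, ⋃ (_ : n₀ ≤ m),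
    Set.uIcc ((E.a j (2*m) : ℝ)) ((E.a j (2*m+1) : ℝ)) with hC
  have hsub : AStr E n₀ ⊆ C := by
    intro t ht
    simp only [AStr, Set.mem_iUnion] at ht
    obtain ⟨j, m, hm, ht⟩ := ht
    exact Or.inr (Set.mem_iUnion.2 ⟨j, Set.mem_iUnion.2 ⟨m, Set.mem_iUnion.2
      ⟨hm, Set.uIoo_subset_uIcc_self ht⟩⟩⟩)
  have hclosed : IsClosed C := by
    rw [← isOpen_compl_iff]
    rw [Metric.isOpen_iff]
    intro x hx
    have hxl : x ≠ E.limit := by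
      intro h; exact hx (Or.inl (by simp [h]))
    have hε : 0 < |x - E.limit| := by
      simp [sub_eq_zero, hxl]
    set ε := |x - E.limit| with hεdef
    -- find N beyond which all points are ε/2-close to limit
    have h0 := Metric.tendsto_atTop.1 (E.tendsto 0) (ε/2) (by linarith)
    have h1 := Metric.tendsto_atTop.1 (E.tendsto 1) (ε/2) (by linarith)
    obtain ⟨N0, hN0⟩ := h0
    obtain ⟨N1, hN1⟩ := h1
    set N := max N0 N1 with hN
    have hfar : ∀ (j : Fin 2) (i : ℕ), N ≤ i → |((E.a j i : ℝ)) - E.limit| < ε/2 := by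
      intro j i hi
      fin_cases j
      · have := hN0 i (le_trans (le_max_left _ _) hi)
        rwa [Real.dist_eq] at this
      · have := hN1 i (le_trans (le_max_right _ _) hi)
        rwa [Real.dist_eq] at this
    -- finite part
    set C₀ : Set ℝ := ⋃ j : Fin 2, ⋃ m ∈ Finset.Ico n₀ N,
      Set.uIcc ((E.a j (2*m) : ℝ)) ((E.a j (2*m+1) : ℝ)) with hC₀
    have hC₀closed : IsClosed C₀ := by
      apply isClosed_iUnion_of_finite
      intro j
      apply Set.Finite.isClosed_biUnion (Finset.finite_toSet _)
      intro m _
      exact isClosed_Icc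
    have hxC₀ : x ∉ C₀ := by
      intro hmem
      apply hx
      simp only [hC₀, Set.mem_iUnion] at hmem
      obtain ⟨j, m, hm, hmem⟩ := hmem
      simp only [Finset.mem_Ico] at hm
      exact Or.inr (Set.mem_iUnion.2 ⟨j, Set.mem_iUnion.2 ⟨m, Set.mem_iUnion.2 ⟨hm.1, hmem⟩⟩⟩)
    obtain ⟨δ, hδpos, hδ⟩ := Metric.isOpen_iff.1 hC₀closed.isOpen_compl x hxC₀
    refine ⟨min δ (ε/2), by positivity, ?_⟩
    intro y hy
    simp only [Metric.mem_ball, lt_min_iff] at hy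
    intro hyC
    rcases hyC with hyl | hymem
    · -- y = limit : but dist x y < ε/2 while dist x limit = ε
      simp only [Set.mem_singleton_iff] at hyl
      subst hyl
      rw [Real.dist_eq] at hy
      have h2 := hy.2
      rw [abs_sub_comm] at h2
      rw [hεdef] at h2
      linarith
    · simp only [Set.mem_iUnion] at hymem
      obtain ⟨j, m, hm, hymem⟩ := hymem
      by_cases hmN : m < N
      · exact hδ (Metric.mem_ball.2 hy.1) (Set.mem_iUnion.2 ⟨j, Set.mem_iUnion.2 ⟨m,
          Set.mem_iUnion.2 ⟨Finset.mem_Ico.2 ⟨hm, hmN⟩, hymem⟩⟩⟩)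
      · push_neg at hmN
        -- both endpoints are ε/2-close to the limit, so y is too
        have he1 : |((E.a j (2*m) : ℝ)) - E.limit| < ε/2 := hfar j _ (by omega)
        have he2 : |((E.a j (2*m+1) : ℝ)) - E.limit| < ε/2 := hfar j _ (by omega)
        have hymem' := hymem
        rw [Set.uIcc_eq_union] at hymem'
        have hyd : |y - E.limit| < ε/2 := by
          rcases hymem' with h | h
          · obtain ⟨h1, h2⟩ := h
            rw [abs_lt] at he1 he2 ⊢
            constructor <;> [linarith [he1.1]; linarith [he2.2]]
          · obtain ⟨h1, h2⟩ := h
            rw [abs_lt] at he1 he2 ⊢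
            constructor <;> [linarith [he2.1]; linarith [he1.2]]
        rw [Real.dist_eq] at hy
        have : |x - E.limit| < ε := by
          calc |x - E.limit| = |(x - y) + (y - E.limit)| := by ring_nf
            _ ≤ |x - y| + |y - E.limit| := abs_add_le _ _
            _ < ε/2 + ε/2 := by
                have hxy : |x - y| < ε/2 := by rw [abs_sub_comm]; exact hy.2
                exact add_lt_add hxy hyd
            _ = ε := by ring
        exact absurd this (by simp [hεdef])
  have h1 : closure (AStr E n₀) ⊆ C := closure_minimal hsub hclosed
  intro t ht
  have htC := h1 ht
  rcases htC with h | h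
  · exact Or.inr (Or.inl h)
  · simp only [Set.mem_iUnion] at h
    obtain ⟨j, m, hm, hmem⟩ := h
    -- either t is in the open interval (hence AStr) or an endpoint (hence Skel)
    rcases eq_or_ne t ((E.a j (2*m) : ℝ)) with rfl | h1'
    · exact Or.inr (Or.inr (Set.mem_iUnion.2 ⟨j, Set.mem_iUnion.2 ⟨2*m, rfl⟩⟩))
    rcases eq_or_ne t ((E.a j (2*m+1) : ℝ)) with rfl | h2'
    · exact Or.inr (Or.inr (Set.mem_iUnion.2 ⟨j, Set.mem_iUnion.2 ⟨2*m+1, rfl⟩⟩))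
    left
    apply ioo_subset_astr E j hm
    rcases lt_trichotomy ((E.a j (2*m) : ℝ)) ((E.a j (2*m+1) : ℝ)) with hlt | heq | hgt
    · rw [Set.uIcc_of_le hlt.le] at hmem
      rw [Set.uIoo_of_lt hlt]
      exact ⟨lt_of_le_of_ne hmem.1 (Ne.symm h1'), lt_of_le_of_ne hmem.2 h2'⟩
    · rw [Set.uIcc_of_le heq.le, heq] at hmem
      exact absurd (le_antisymm hmem.2 hmem.1) h2'
    · rw [Set.uIcc_of_ge hgt.le] at hmem
      rw [Set.uIoo_of_gt hgt]
      exact ⟨lt_of_le_of_ne hmem.1 (Ne.symm h2'), lt_of_le_of_ne hmem.2 h1'⟩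

/-! ### Countable boundary -/

theorem comp_boundary_countable {f : ℝ → Fin 2} {X : Set ℝ} (h : Comp A f X) :
    (closure X \ X).Countable := by
  rcases h with ⟨q, r, rfl, -⟩ | ⟨α, n₀, rfl, -⟩
  · by_cases hqr : (q : ℝ) < (r : ℝ)
    · apply Set.Countable.mono ?_
        (Set.Countable.insert ((q:ℝ)) (Set.countable_singleton ((r:ℝ))))
      intro t ht
      rw [closure_Ioo hqr.ne] at ht
      obtain ⟨⟨h1, h2⟩, h3⟩ := ht
      simp only [Set.mem_Ioo, not_and_or, not_lt] at h3
      simp only [Set.mem_insert_iff, Set.mem_singleton_iff]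
      rcases h3 with h | h
      · left; linarith
      · right; linarith
    · rw [Set.Ioo_eq_empty hqr]
      simp
  · apply Set.Countable.mono ?_ (skel_countable (A α))
    intro t ht
    have := astr_closure_subset (A α) n₀ ht.1
    rcases this with h | h
    · exact absurd h ht.2
    · exact h

theorem cells_boundary_countable {f : ℝ → Fin 2} :
    ∀ (L : List (ℚ × Set ℝ)) (x y : ℚ), Cells A f x L y →
      (closure (lU L) \ lU L).Countable := by
  intro L
  induction L with
  | nil => intro x y h; simp
  | cons p T ih =>
    obtain ⟨w, X⟩ := p
    intro x y h
    obtain ⟨rfl, hlt, hcl, hcomp, htail⟩ := h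
    rw [lU_cons, closure_union]
    apply Set.Countable.mono ?_
      ((comp_boundary_countable A hcomp).union (ih _ _ htail))
    intro t ht
    obtain ⟨h1, h2⟩ := ht
    simp only [Set.mem_union] at h1 h2 ⊢
    push_neg at h2
    rcases h1 with h | h
    · exact Or.inl ⟨h, h2.1⟩
    · exact Or.inr ⟨h, h2.2⟩

theorem pcond_boundary_null {U : Set ℝ} {f : ℝ → Fin 2} (h : PCond A U f) :
    volume (closure U \ U) = 0 := by
  obtain ⟨L, hL, hU⟩ := cells_of_pcond A h
  rw [← hU]
  exact Set.Countable.measure_zero (cells_boundary_countable A L 0 1 hL) _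

end Fact28

namespace Fact28
open Set
variable {Λ : Type*} (A : Λ → SElem)

/-! ### Separation and merging -/

def sep (X Y : Set ℝ) : Prop :=
  ∃ w : ℚ, (∀ t ∈ closure X, t < (w:ℝ)) ∧ (∀ t ∈ closure Y, (w:ℝ) < t)

theorem sep_of_bounds {X Y : Set ℝ} {b c : ℝ} (hX : ∀ t ∈ X, t ≤ b)
    (hY : ∀ t ∈ Y, c ≤ t) (hbc : b < c) : sep X Y := by
  obtain ⟨w, hw1, hw2⟩ := exists_rat_btwn hbc
  refine ⟨w, ?_, ?_⟩
  · intro t ht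
    have hcl : closure X ⊆ Set.Iic b := closure_minimal hX isClosed_Iic
    exact lt_of_le_of_lt (hcl ht) hw1
  · intro t ht
    have hcl : closure Y ⊆ Set.Ici c := closure_minimal hY isClosed_Ici
    exact lt_of_lt_of_le hw2 (hcl ht)

theorem sep_trans {X Z Y : Set ℝ} (h1 : sep X Z) (h2 : sep Z Y) (hZ : Z.Nonempty) :
    sep X Y := by
  obtain ⟨w₁, h11, h12⟩ := h1
  obtain ⟨w₂, h21, h22⟩ := h2
  obtain ⟨z, hz⟩ := hZ
  have hzc := subset_closure hz
  have hw12 : (w₁:ℝ) < w₂ := lt_trans (h12 z hzc) (h21 z hzc)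
  exact ⟨w₂, fun t ht => lt_trans (h11 t ht) hw12, h22⟩

theorem min_extract : ∀ (CS : List (Set ℝ)), CS ≠ [] → (∀ X ∈ CS, X.Nonempty) →
    CS.Pairwise (fun X Y => sep X Y ∨ sep Y X) →
    ∃ X CS', (X :: CS').Perm CS ∧ (∀ Y ∈ CS', sep X Y) := by
  intro CS
  induction CS with
  | nil => intro h; exact absurd rfl h
  | cons Z T ih =>
    intro _ hne hpw
    rcases List.pairwise_cons.1 hpw with ⟨hZ, hT⟩
    cases T with
    | nil => exact ⟨Z, [], List.Perm.refl _, by simp⟩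
    | cons W T' =>
      obtain ⟨X, CS', hperm, hmin⟩ := ih (by simp) (fun Y hY => hne Y (List.mem_cons_of_mem _ hY)) hT
      have hXmem : X ∈ W :: T' := hperm.mem_iff.1 (by simp)
      rcases hZ X hXmem with hsep | hsep
      · -- Z is the minimum
        refine ⟨Z, W :: T', List.Perm.refl _, ?_⟩
        intro Y hY
        have hYX : Y = X ∨ Y ∈ CS' := by
          have : Y ∈ X :: CS' := hperm.mem_iff.2 hY
          simpa using this
        rcases hYX with rfl | hY'
        · exact hsep
        · exact sep_trans hsep (hmin Y hY') (hne X (List.mem_cons_of_mem _ hXmem))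
      · -- X is the minimum
        refine ⟨X, Z :: CS', ?_, ?_⟩
        · exact (List.Perm.swap Z X CS').trans (List.Perm.cons Z hperm)
        · intro Y hY
          rcases List.mem_cons.1 hY with rfl | hY'
          · exact hsep
          · exact hmin Y hY'

theorem sep_all_wall {X : Set ℝ} (hXne : X.Nonempty) {B₁ : ℚ}
    (hXcl : ∀ t ∈ closure X, t < (B₁:ℝ)) :
    ∀ (CS' : List (Set ℝ)), (∀ Y ∈ CS', sep X Y) →
    ∃ w : ℚ, (∀ t ∈ closure X, t < (w:ℝ)) ∧
      (∀ Y ∈ CS', ∀ t ∈ closure Y, (w:ℝ) < t) ∧ w < B₁ := by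
  intro CS'
  induction CS' with
  | nil =>
    intro _
    have hclne : (closure X).Nonempty := hXne.closure
    have hbdd : BddAbove (closure X) := ⟨B₁, fun t ht => (hXcl t ht).le⟩
    have hmem : sSup (closure X) ∈ closure X := isClosed_closure.csSup_mem hclne hbdd
    obtain ⟨w, hw1, hw2⟩ := exists_rat_btwn (hXcl _ hmem)
    refine ⟨w, fun t ht => lt_of_le_of_lt (le_csSup hbdd ht) hw1, by simp, ?_⟩
    exact_mod_cast hw2
  | cons Y T ih =>
    intro hsep
    obtain ⟨w₀, h01, h02, h03⟩ := ih (fun Z hZ => hsep Z (List.mem_cons_of_mem _ hZ))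
    obtain ⟨wY, hY1, hY2⟩ := hsep Y (by simp)
    refine ⟨min w₀ wY, ?_, ?_, ?_⟩
    · intro t ht
      have h1 := h01 t ht
      have h2 := hY1 t ht
      push_cast
      exact lt_min h1 h2
    · intro Z hZ t ht
      rcases List.mem_cons.1 hZ with rfl | hZ'
      · have := hY2 t ht
        calc ((min w₀ wY : ℚ) : ℝ) ≤ (wY : ℝ) := by push_cast; exact min_le_right _ _
          _ < t := this
      · have := h02 Z hZ' t ht
        calc ((min w₀ wY : ℚ) : ℝ) ≤ (w₀ : ℝ) := by push_cast; exact min_le_left _ _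
          _ < t := this
    · exact lt_of_le_of_lt (min_le_left _ _) h03

theorem comp_empty {f : ℝ → Fin 2} : Comp A f (∅ : Set ℝ) := by
  left
  refine ⟨0, 0, ?_, 0, by simp⟩
  rw [show ((0:ℚ):ℝ) = (0:ℝ) from by norm_num, Set.Ioo_self]

theorem merge {f : ℝ → Fin 2} : ∀ (n : ℕ) (CS : List (Set ℝ)), CS.length = n →
    ∀ (B₀ B₁ : ℚ), B₀ < B₁ →
    (∀ X ∈ CS, Comp A f X ∧ closure X ⊆ Set.Ioo ((B₀:ℚ):ℝ) ((B₁:ℚ):ℝ) ∧ X.Nonempty) →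
    CS.Pairwise (fun X Y => sep X Y ∨ sep Y X) →
    ∃ L, Cells A f B₀ L B₁ ∧ lU L = ⋃₀ {X | X ∈ CS} := by
  intro n
  induction n using Nat.strong_induction_on with
  | _ n ih =>
    intro CS hlen B₀ B₁ hB h1 h2
    cases CS with
    | nil =>
      refine ⟨[(B₀, ∅)], ⟨rfl, ?_, by simp, comp_empty A, rfl⟩, by simp⟩
      simpa [hw] using hB
    | cons Z T =>
      obtain ⟨X, CS', hperm, hmin⟩ := min_extract (Z :: T) (by simp)
        (fun Y hY => (h1 Y hY).2.2) h2
      have hmemCS : ∀ Y, Y ∈ X :: CS' ↔ Y ∈ Z :: T := fun Y => hperm.mem_iff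
      have hX := h1 X ((hmemCS X).1 (by simp))
      obtain ⟨w, hw1, hw2, hw3⟩ := sep_all_wall hX.2.2
        (fun t ht => (hX.2.1 ht).2) CS' hmin
      have hBw : B₀ < w := by
        obtain ⟨t₀, ht₀⟩ := hX.2.2
        have h1' := (hX.2.1 (subset_closure ht₀)).1
        have h2' := hw1 t₀ (subset_closure ht₀)
        exact_mod_cast lt_trans h1' h2'
      -- recursive call on CS'
      have hlen' : CS'.length < n := by
        have h2l := hperm.length_eq
        simp only [List.length_cons] at h2l hlen
        omega
      have hcond1 : ∀ Y ∈ CS', Comp A f Y ∧ closure Y ⊆ Set.Ioo ((w:ℚ):ℝ) ((B₁:ℚ):ℝ) ∧ Y.Nonempty := by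
        intro Y hY
        have hYfull := h1 Y ((hmemCS Y).1 (List.mem_cons_of_mem _ hY))
        refine ⟨hYfull.1, ?_, hYfull.2.2⟩
        intro t ht
        exact ⟨hw2 Y hY t ht, (hYfull.2.1 ht).2⟩
      have hcond2 : CS'.Pairwise (fun X Y => sep X Y ∨ sep Y X) := by
        have hpw' : (X :: CS').Pairwise (fun X Y => sep X Y ∨ sep Y X) := by
          refine (List.Perm.pairwise_iff ?_ hperm).2 h2
          intro a b h
          exact h.symm
        exact (List.pairwise_cons.1 hpw').2
      obtain ⟨L', hL', hU'⟩ := ih CS'.length hlen' CS' rfl w B₁ hw3 hcond1 hcond2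
      refine ⟨(B₀, X) :: L', ?_, ?_⟩
      · have hhw : hw L' B₁ = w := cells_hw A hL'
        refine ⟨rfl, ?_, ?_, hX.1, ?_⟩
        · rw [hhw]; exact hBw
        · rw [hhw]
          intro t ht
          exact ⟨(hX.2.1 ht).1, hw1 t ht⟩
        · rw [hhw]; exact hL'
      · rw [lU_cons, hU']
        ext t
        simp only [Set.mem_union, Set.mem_sUnion, Set.mem_setOf_eq]
        constructor
        · rintro (ht | ⟨Y, hY, ht⟩)
          · exact ⟨X, (hmemCS X).1 (by simp), ht⟩
          · exact ⟨Y, (hmemCS Y).1 (List.mem_cons_of_mem _ hY), ht⟩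
        · rintro ⟨Y, hY, ht⟩
          have : Y ∈ X :: CS' := (hmemCS Y).2 hY
          rcases List.mem_cons.1 this with rfl | hY'
          · exact Or.inl ht
          · exact Or.inr ⟨Y, hY', ht⟩

end Fact28

namespace Fact28
open Set
variable {Λ : Type*} (A : Λ → SElem)

/-! ### Lists of rational intervals -/

def mU : List (ℚ × ℚ) → Set ℝ
  | [] => ∅
  | (u, v) :: T => Set.Ioo ((u:ℚ):ℝ) ((v:ℚ):ℝ) ∪ mU T

def mC : List (ℚ × ℚ) → Set ℝ
  | [] => ∅
  | (u, v) :: T => Set.Icc ((u:ℚ):ℝ) ((v:ℚ):ℝ) ∪ mC T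

def tot : List (ℚ × ℚ) → ℚ
  | [] => 0
  | (u, v) :: T => (v - u) + tot T

@[simp] theorem mU_nil : mU [] = ∅ := rfl
@[simp] theorem mU_cons (u v : ℚ) (T : List (ℚ × ℚ)) :
    mU ((u,v) :: T) = Set.Ioo ((u:ℚ):ℝ) ((v:ℚ):ℝ) ∪ mU T := rfl
@[simp] theorem mC_nil : mC [] = ∅ := rfl
@[simp] theorem mC_cons (u v : ℚ) (T : List (ℚ × ℚ)) :
    mC ((u,v) :: T) = Set.Icc ((u:ℚ):ℝ) ((v:ℚ):ℝ) ∪ mC T := rfl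
@[simp] theorem tot_nil : tot [] = 0 := rfl
@[simp] theorem tot_cons (u v : ℚ) (T : List (ℚ × ℚ)) :
    tot ((u,v) :: T) = (v - u) + tot T := rfl

@[simp] theorem tot_cons' (p : ℚ × ℚ) (T : List (ℚ × ℚ)) :
    tot (p :: T) = (p.2 - p.1) + tot T := rfl

theorem tot_cons_real (u v : ℚ) (T : List (ℚ × ℚ)) :
    ((tot ((u,v) :: T) : ℚ) : ℝ) = ((v:ℝ) - (u:ℝ)) + ((tot T : ℚ) : ℝ) := by
  simp only [tot_cons]
  push_cast
  ring

theorem mU_open (Mc : List (ℚ × ℚ)) : IsOpen (mU Mc) := by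
  induction Mc with
  | nil => simp
  | cons p T ih => obtain ⟨u, v⟩ := p; exact (isOpen_Ioo).union ih

theorem mC_closed (Mc : List (ℚ × ℚ)) : IsClosed (mC Mc) := by
  induction Mc with
  | nil => simp
  | cons p T ih => obtain ⟨u, v⟩ := p; exact (isClosed_Icc).union ih

theorem mU_subset_mC (Mc : List (ℚ × ℚ)) : mU Mc ⊆ mC Mc := by
  induction Mc with
  | nil => simp
  | cons p T ih =>
    obtain ⟨u, v⟩ := p
    exact Set.union_subset_union Set.Ioo_subset_Icc_self ih

theorem closure_mU_subset (Mc : List (ℚ × ℚ)) : closure (mU Mc) ⊆ mC Mc := by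
  induction Mc with
  | nil => simp
  | cons p T ih =>
    obtain ⟨u, v⟩ := p
    rw [mU_cons, closure_union]
    exact Set.union_subset_union (closure_minimal Set.Ioo_subset_Icc_self isClosed_Icc) ih

theorem mC_subset_of_Icc {W : Set ℝ} (Mc : List (ℚ × ℚ))
    (h : ∀ p ∈ Mc, Set.Icc ((p.1:ℚ):ℝ) ((p.2:ℚ):ℝ) ⊆ W) : mC Mc ⊆ W := by
  induction Mc with
  | nil => simp
  | cons p T ih =>
    obtain ⟨u, v⟩ := p
    rw [mC_cons]
    exact Set.union_subset (h (u,v) (by simp)) (ih fun q hq => h q (List.mem_cons_of_mem _ hq))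

theorem tot_nonneg (Mc : List (ℚ × ℚ)) (h : ∀ p ∈ Mc, p.1 < p.2) : 0 ≤ tot Mc := by
  induction Mc with
  | nil => simp
  | cons p T ih =>
    obtain ⟨u, v⟩ := p
    have h1 := h (u,v) (by simp)
    have h2 := ih fun q hq => h q (List.mem_cons_of_mem _ hq)
    simp only [tot_cons]
    have : (0:ℚ) ≤ v - u := by simp at h1 ⊢; linarith
    linarith

theorem mU_lower {c : ℝ} (T : List (ℚ × ℚ)) (h : ∀ p ∈ T, c < ((p.1:ℚ):ℝ)) :
    mU T ⊆ Set.Ioi c := by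
  induction T with
  | nil => simp
  | cons p T ih =>
    obtain ⟨u, v⟩ := p
    rw [mU_cons]
    apply Set.union_subset
    · intro t ht
      exact lt_trans (h (u,v) (by simp)) ht.1
    · exact ih fun q hq => h q (List.mem_cons_of_mem _ hq)

theorem volume_mU (Mc : List (ℚ × ℚ)) (hlt : ∀ p ∈ Mc, p.1 < p.2)
    (hpw : Mc.Pairwise (fun p q => p.2 < q.1)) :
    volume (mU Mc) = ENNReal.ofReal ((tot Mc : ℚ) : ℝ) := by
  induction Mc with
  | nil => simp
  | cons p T ih =>
    obtain ⟨u, v⟩ := p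
    rcases List.pairwise_cons.1 hpw with ⟨hhead, htail⟩
    have hdisj : Disjoint (Set.Ioo ((u:ℚ):ℝ) ((v:ℚ):ℝ)) (mU T) := by
      rw [Set.disjoint_left]
      intro t ht hmem
      have h2 : t ∈ Set.Ioi ((v:ℚ):ℝ) := mU_lower T (fun q hq => by
        exact_mod_cast (Rat.cast_lt (K := ℝ)).2 (hhead q hq)) hmem
      exact absurd ht.2 (not_lt.2 (le_of_lt h2))
    rw [mU_cons, measure_union hdisj (mU_open T).measurableSet, Real.volume_Ioo,
      ih (fun q hq => hlt q (List.mem_cons_of_mem _ hq)) htail]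
    rw [← ENNReal.ofReal_add (by
        have := hlt (u,v) (by simp)
        have : (u:ℝ) < (v:ℝ) := by exact_mod_cast this
        linarith) (by
        have := tot_nonneg T (fun q hq => hlt q (List.mem_cons_of_mem _ hq))
        exact_mod_cast this)]
    rw [tot_cons_real]

theorem volume_mC_le (Mc : List (ℚ × ℚ)) (hlt : ∀ p ∈ Mc, p.1 < p.2) :
    volume (mC Mc) ≤ ENNReal.ofReal ((tot Mc : ℚ) : ℝ) := by
  induction Mc with
  | nil => simp
  | cons p T ih =>
    obtain ⟨u, v⟩ := p
    rw [mC_cons]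
    refine le_trans (measure_union_le _ _) ?_
    rw [Real.volume_Icc]
    have h1 := ih (fun q hq => hlt q (List.mem_cons_of_mem _ hq))
    refine le_trans (add_le_add le_rfl h1) ?_
    rw [← ENNReal.ofReal_add (by
        have : (u:ℝ) < (v:ℝ) := by exact_mod_cast hlt (u,v) (by simp)
        linarith) (by
        exact_mod_cast tot_nonneg T (fun q hq => hlt q (List.mem_cons_of_mem _ hq)))]
    apply le_of_eq
    rw [tot_cons_real]

/-! ### Trimming -/

theorem trim : ∀ (Mc : List (ℚ × ℚ)) (s s' : ℝ), 0 ≤ s → s < s' →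
    (∀ p ∈ Mc, p.1 < p.2) → Mc.Pairwise (fun p q => p.2 < q.1) →
    s < ((tot Mc : ℚ) : ℝ) →
    ∃ Mc' : List (ℚ × ℚ), (∀ p ∈ Mc', p.1 < p.2) ∧
      Mc'.Pairwise (fun p q => p.2 < q.1) ∧
      (∀ p' ∈ Mc', ∃ p ∈ Mc, p.1 = p'.1 ∧ p'.2 ≤ p.2) ∧
      s < ((tot Mc' : ℚ) : ℝ) ∧ ((tot Mc' : ℚ) : ℝ) < s' := by
  intro Mc
  induction Mc with
  | nil =>
    intro s s' h0 hss' hlt hpw htot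
    simp at htot
    linarith
  | cons p T ih =>
    intro s s' h0 hss' hlt hpw htot
    obtain ⟨u, v⟩ := p
    rcases List.pairwise_cons.1 hpw with ⟨hhead, htail⟩
    by_cases hT : s < ((tot T : ℚ) : ℝ)
    · obtain ⟨Mc', h1, h2, h3, h4, h5⟩ := ih s s' h0 hss'
        (fun q hq => hlt q (List.mem_cons_of_mem _ hq)) htail hT
      exact ⟨Mc', h1, h2, fun p' hp' => by
        obtain ⟨q, hq, hq2⟩ := h3 p' hp'
        exact ⟨q, List.mem_cons_of_mem _ hq, hq2⟩, h4, h5⟩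
    · push_neg at hT
      have huv : (u:ℝ) < (v:ℝ) := by exact_mod_cast hlt (u,v) (by simp)
      have htotT : (0:ℝ) ≤ ((tot T : ℚ) : ℝ) := by
        exact_mod_cast tot_nonneg T (fun q hq => hlt q (List.mem_cons_of_mem _ hq))
      rw [tot_cons_real] at htot
      -- choose v' with u + max 0 (s - tot T) < v' < u + min (v-u) (s'-tot T)
      have hlo : max 0 (s - ((tot T : ℚ) : ℝ)) < min ((v:ℝ) - u) (s' - ((tot T : ℚ) : ℝ)) := by
        refine max_lt (lt_min ?_ ?_) (lt_min ?_ ?_) <;> linarith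
      have hlo2 : (u:ℝ) + max 0 (s - ((tot T : ℚ) : ℝ)) <
          (u:ℝ) + min ((v:ℝ) - u) (s' - ((tot T : ℚ) : ℝ)) := by linarith
      obtain ⟨v', hv'1, hv'2⟩ := exists_rat_btwn hlo2
      refine ⟨(u, v') :: T, ?_, ?_, ?_, ?_, ?_⟩
      · intro q hq
        rcases List.mem_cons.1 hq with rfl | hq'
        · show u < v'
          have : (u:ℝ) < (v':ℝ) := by
            have := le_max_left (0:ℝ) (s - ((tot T : ℚ) : ℝ))
            linarith
          exact_mod_cast this
        · exact hlt q (List.mem_cons_of_mem _ hq')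
      · rw [List.pairwise_cons]
        refine ⟨?_, htail⟩
        intro q hq
        have h1 : (v':ℝ) < (v:ℝ) := by
          have := min_le_left ((v:ℝ) - u) (s' - ((tot T : ℚ) : ℝ))
          linarith
        have h2 : v < q.1 := hhead q hq
        have : (v':ℝ) < ((q.1:ℚ):ℝ) := by
          have : (v:ℝ) < ((q.1:ℚ):ℝ) := by exact_mod_cast h2
          linarith
        exact_mod_cast this
      · intro p' hp'
        rcases List.mem_cons.1 hp' with rfl | hp''
        · refine ⟨(u, v), by simp, rfl, ?_⟩
          show v' ≤ v
          have h1 : (v':ℝ) < (v:ℝ) := by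
            have := min_le_left ((v:ℝ) - u) (s' - ((tot T : ℚ) : ℝ))
            linarith
          exact_mod_cast le_of_lt h1
        · exact ⟨p', List.mem_cons_of_mem _ hp'', rfl, le_refl _⟩
      · rw [tot_cons_real]
        have := le_max_right (0:ℝ) (s - ((tot T : ℚ) : ℝ))
        linarith
      · rw [tot_cons_real]
        have := min_le_right ((v:ℝ) - u) (s' - ((tot T : ℚ) : ℝ))
        linarith

end Fact28

namespace Fact28
open Set
variable {Λ : Type*} (A : Λ → SElem)

set_option maxHeartbeats 1000000 in
theorem mining (W : Set ℝ) (hW : IsOpen W) (hWb : W ⊆ Set.Ioo 0 1) {s s' : ℝ}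
    (h0 : 0 ≤ s) (hss' : s < s') (hsW : ENNReal.ofReal s < volume W) :
    ∃ Mc : List (ℚ × ℚ), (∀ p ∈ Mc, p.1 < p.2) ∧
      (∀ p ∈ Mc, Set.Icc ((p.1:ℚ):ℝ) ((p.2:ℚ):ℝ) ⊆ W) ∧
      Mc.Pairwise (fun p q => p.2 < q.1) ∧
      s < ((tot Mc : ℚ) : ℝ) ∧ ((tot Mc : ℚ) : ℝ) < s' := by
  classical
  set S : ℕ → Finset ℕ := fun n => (Finset.range (2^n)).filter
    (fun i => Set.Icc ((i:ℝ)/2^n) (((i:ℝ)+1)/2^n) ⊆ W) with hS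
  set E : ℕ → Set ℝ := fun n => ⋃ i ∈ S n, Set.Icc ((i:ℝ)/2^n) (((i:ℝ)+1)/2^n) with hE
  have hEW : ∀ n, E n ⊆ W := by
    intro n x hx
    simp only [hE, Set.mem_iUnion] at hx
    obtain ⟨i, hi, hxi⟩ := hx
    exact (Finset.mem_filter.1 hi).2 hxi
  have hmono : Monotone E := by
    apply monotone_nat_of_le_succ
    intro n x hx
    simp only [hE, Set.mem_iUnion] at hx ⊢
    obtain ⟨i, hi, hxi⟩ := hx
    obtain ⟨hirange, hisub⟩ := Finset.mem_filter.1 hi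
    have hirange' : i < 2^n := Finset.mem_range.1 hirange
    have hpow1 : (0:ℝ) < 2^(n+1) := by positivity
    have hpown : (0:ℝ) < 2^n := by positivity
    have e1 : ((2*i:ℕ):ℝ)/2^(n+1) = (i:ℝ)/2^n := by push_cast; rw [pow_succ]; ring
    have e2 : (((2*i:ℕ):ℝ)+1)/2^(n+1) = (2*(i:ℝ)+1)/2^(n+1) := by push_cast; ring
    have e3 : ((2*i+1:ℕ):ℝ)/2^(n+1) = (2*(i:ℝ)+1)/2^(n+1) := by push_cast; ring
    have e4 : (((2*i+1:ℕ):ℝ)+1)/2^(n+1) = ((i:ℝ)+1)/2^n := by push_cast; rw [pow_succ]; ring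
    have e5 : (2*(i:ℝ)+1)/2^(n+1) ≤ ((i:ℝ)+1)/2^n := by
      have h := (div_le_div_iff_of_pos_right hpow1).2
        (show 2*(i:ℝ)+1 ≤ 2*((i:ℝ)+1) by linarith)
      have heq : (2*((i:ℝ)+1))/2^(n+1) = ((i:ℝ)+1)/2^n := by rw [pow_succ]; ring
      linarith
    have e6 : (i:ℝ)/2^n ≤ (2*(i:ℝ)+1)/2^(n+1) := by
      have h := (div_le_div_iff_of_pos_right hpow1).2
        (show 2*(i:ℝ) ≤ 2*(i:ℝ)+1 by linarith)
      have heq : (2*(i:ℝ))/2^(n+1) = (i:ℝ)/2^n := by rw [pow_succ]; ring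
      linarith
    by_cases hxle : x ≤ (2*(i:ℝ)+1)/2^(n+1)
    · refine ⟨2*i, ?_, ?_⟩
      · rw [Finset.mem_filter]
        refine ⟨by rw [Finset.mem_range, pow_succ]; omega, ?_⟩
        refine Set.Subset.trans (Set.Icc_subset_Icc (le_of_eq e1.symm) ?_) hisub
        rw [e2]
        exact e5
      · rw [Set.mem_Icc, e1, e2]
        exact ⟨hxi.1, hxle⟩
    · push_neg at hxle
      refine ⟨2*i+1, ?_, ?_⟩
      · rw [Finset.mem_filter]
        refine ⟨by rw [Finset.mem_range, pow_succ]; omega, ?_⟩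
        refine Set.Subset.trans (Set.Icc_subset_Icc ?_ (le_of_eq e4)) hisub
        rw [e3]
        exact e6
      · rw [Set.mem_Icc, e3, e4]
        exact ⟨hxle.le, hxi.2⟩
  have hunion : ⋃ n, E n = W := by
    apply Set.Subset.antisymm
    · exact Set.iUnion_subset hEW
    · intro x hx
      obtain ⟨ε, hε, hball⟩ := Metric.isOpen_iff.1 hW x hx
      obtain ⟨n, hn2⟩ : ∃ n : ℕ, (1:ℝ)/2^n < ε := by
        obtain ⟨n, hn⟩ := exists_pow_lt_of_lt_one hε (by norm_num : (1:ℝ)/2 < 1)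
        exact ⟨n, by rwa [one_div, inv_pow, ← one_div] at hn⟩
      obtain ⟨hx0, hx1⟩ := hWb hx
      have hpow : (0:ℝ) < 2^n := by positivity
      set iz := ⌊x * 2^n⌋ with hiz
      have hiznn : 0 ≤ iz := Int.floor_nonneg.2 (by positivity)
      set i := iz.toNat with hi
      have hicast : ((i:ℕ):ℝ) = (iz:ℝ) := by
        rw [hi]
        exact_mod_cast congrArg (fun z : ℤ => (z:ℝ)) (Int.toNat_of_nonneg hiznn)
      have hfl1 : ((i:ℕ):ℝ) ≤ x * 2^n := by rw [hicast]; exact Int.floor_le _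
      have hfl2 : x * 2^n < ((i:ℕ):ℝ) + 1 := by rw [hicast]; exact Int.lt_floor_add_one _
      have hxmem : x ∈ Set.Icc (((i:ℕ):ℝ)/2^n) ((((i:ℕ):ℝ)+1)/2^n) := by
        constructor
        · rw [div_le_iff₀ hpow]; exact hfl1
        · rw [le_div_iff₀ hpow]; exact hfl2.le
      have hsub : Set.Icc (((i:ℕ):ℝ)/2^n) ((((i:ℕ):ℝ)+1)/2^n) ⊆ W := by
        refine Set.Subset.trans ?_ hball
        intro t ht
        rw [Metric.mem_ball, Real.dist_eq]
        have hwidth : (((i:ℕ):ℝ)+1)/2^n - ((i:ℕ):ℝ)/2^n = 1/2^n := by ring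
        rw [abs_sub_lt_iff]
        constructor
        · have h1 := ht.2; have h2 := hxmem.1; linarith
        · have h1 := ht.1; have h2 := hxmem.2; linarith
      have hirange : i < 2^n := by
        have h1 : x * 2^n < 2^n := by
          nlinarith
        have h2 : ((i:ℕ):ℝ) < ((2^n : ℕ):ℝ) := by push_cast; linarith
        exact_mod_cast h2
      refine Set.mem_iUnion.2 ⟨n, ?_⟩
      simp only [hE, Set.mem_iUnion]
      exact ⟨i, Finset.mem_filter.2 ⟨Finset.mem_range.2 hirange, hsub⟩, hxmem⟩
  have htend := MeasureTheory.tendsto_measure_iUnion_atTop (μ := volume) hmono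
  rw [hunion] at htend
  have hev := htend.eventually_const_lt hsW
  obtain ⟨n, hn⟩ := hev.exists
  set c := (S n).card with hc
  have hcard : ENNReal.ofReal s < ENNReal.ofReal ((c:ℝ)/2^n) := by
    refine lt_of_lt_of_le hn ?_
    calc volume (E n) ≤ ∑ i ∈ S n, volume (Set.Icc ((i:ℝ)/2^n) (((i:ℝ)+1)/2^n)) :=
          measure_biUnion_finset_le _ _
      _ = ∑ _i ∈ S n, ENNReal.ofReal (1/2^n) := by
          apply Finset.sum_congr rfl
          intro i _
          rw [Real.volume_Icc]
          congr 1
          ring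
      _ = c • ENNReal.ofReal (1/2^n) := by rw [Finset.sum_const]
      _ = ENNReal.ofReal ((c:ℝ)/2^n) := by
          rw [nsmul_eq_mul, ← ENNReal.ofReal_natCast c, ← ENNReal.ofReal_mul (by positivity)]
          congr 1
          ring
  have hsc : s < (c:ℝ)/2^n := (ENNReal.ofReal_lt_ofReal_iff_of_nonneg h0).1 hcard
  have hpow : (0:ℝ) < 2^n := by positivity
  have hminpos : (0:ℝ) < min ((1:ℝ)/2^(n+1)) (((c:ℝ)/2^n - s)/(2*(c:ℝ)+1)) := by
    apply lt_min
    · positivity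
    · apply div_pos (by linarith) (by positivity)
  obtain ⟨δ, hδ0, hδ2⟩ := exists_rat_btwn hminpos
  have hδ0' : (0:ℚ) < δ := by exact_mod_cast hδ0
  have hδa : (δ:ℝ) < (1:ℝ)/2^(n+1) := lt_of_lt_of_le hδ2 (min_le_left _ _)
  have hδb : (δ:ℝ) < ((c:ℝ)/2^n - s)/(2*(c:ℝ)+1) := lt_of_lt_of_le hδ2 (min_le_right _ _)
  have hδq : (δ:ℚ) < (1:ℚ)/2^n/2 := by
    have hcast : (((1:ℚ)/2^n/2 : ℚ) : ℝ) = (1:ℝ)/2^(n+1) := by push_cast; rw [pow_succ]; ring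
    rw [← hcast] at hδa
    exact_mod_cast hδa
  set g : ℕ → ℚ × ℚ := fun i => ((i:ℚ)/2^n + δ, ((i:ℚ)+1)/2^n - δ) with hg
  set Mc₀ := ((S n).sort (· ≤ ·)).map g with hMc₀
  have hlen : ((S n).sort (· ≤ ·)).length = c := Finset.length_sort _
  have hwidth : ∀ i : ℕ, (g i).2 - (g i).1 = 1/2^n - 2*δ := by
    intro i
    simp only [hg]
    ring
  have hwidthpos : (0:ℚ) < 1/2^n - 2*δ := by
    have hpq : (0:ℚ) < (1:ℚ)/2^n := by positivity
    linarith [hδq, hpq]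
  have htotl : ∀ l : List ℕ, tot (l.map g) = (l.length : ℚ) * (1/2^n - 2*δ) := by
    intro l
    induction l with
    | nil => simp
    | cons a t ih =>
      simp only [List.map_cons, tot_cons', ih, List.length_cons]
      rw [hwidth]
      push_cast
      ring
  have hglt : ∀ p ∈ Mc₀, p.1 < p.2 := by
    intro p hp
    simp only [hMc₀, List.mem_map] at hp
    obtain ⟨i, _, rfl⟩ := hp
    show (g i).1 < (g i).2
    simp only [hg]
    have harith : ((i:ℚ)+1)/2^n - (i:ℚ)/2^n = 1/2^n := by ring
    linarith [hwidthpos, harith]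
  have hgsub : ∀ p ∈ Mc₀, Set.Icc ((p.1:ℚ):ℝ) ((p.2:ℚ):ℝ) ⊆ W := by
    intro p hp
    simp only [hMc₀, List.mem_map] at hp
    obtain ⟨i, hi, rfl⟩ := hp
    have hi' : i ∈ S n := (Finset.mem_sort (α := ℕ) (· ≤ ·)).1 hi
    have hsub := (Finset.mem_filter.1 hi').2
    refine Set.Subset.trans (Set.Icc_subset_Icc ?_ ?_) hsub
    · show ((i:ℝ)/2^n : ℝ) ≤ (((g i).1 : ℚ) : ℝ)
      simp only [hg]
      push_cast
      linarith
    · show (((g i).2 : ℚ) : ℝ) ≤ ((i:ℝ)+1)/2^n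
      simp only [hg]
      push_cast
      linarith
  have hgpw : Mc₀.Pairwise (fun p q => p.2 < q.1) := by
    rw [hMc₀]
    apply List.Pairwise.map (R := (· < ·))
    · intro a b hab
      show (g a).2 < (g b).1
      simp only [hg]
      have hab' : (a:ℚ) + 1 ≤ (b:ℚ) := by exact_mod_cast hab
      have hpowq : (0:ℚ) < 2^n := by positivity
      have hdd : ((a:ℚ)+1)/2^n ≤ (b:ℚ)/2^n := (div_le_div_iff_of_pos_right hpowq).2 hab'
      linarith
    · exact (Finset.sortedLT_sort _).pairwise
  have htots : s < ((tot Mc₀ : ℚ) : ℝ) := by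
    rw [hMc₀, htotl, hlen]
    have hB : (0:ℝ) < 2*(c:ℝ)+1 := by positivity
    have h1 : (δ:ℝ)*(2*(c:ℝ)+1) < (c:ℝ)/2^n - s := by
      rw [← lt_div_iff₀ hB]
      exact hδb
    have hcast : (((c:ℚ)*(1/2^n - 2*δ) : ℚ) : ℝ) = (c:ℝ)*((1:ℝ)/2^n - 2*(δ:ℝ)) := by
      push_cast
      ring
    rw [show ((c:ℕ):ℚ) = (c:ℚ) from rfl, hcast]
    have hexp : (c:ℝ)*((1:ℝ)/2^n - 2*(δ:ℝ)) = (c:ℝ)/2^n - 2*((c:ℝ)*(δ:ℝ)) := by ring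
    have hexp2 : (δ:ℝ)*(2*(c:ℝ)+1) = 2*((c:ℝ)*(δ:ℝ)) + (δ:ℝ) := by ring
    rw [hexp2] at h1
    rw [hexp]
    linarith [hδ0]
  obtain ⟨Mc', ht1, ht2, ht3, ht4, ht5⟩ := trim Mc₀ s s' h0 hss' hglt hgpw htots
  refine ⟨Mc', ht1, ?_, ht2, ht4, ht5⟩
  intro p' hp'
  obtain ⟨p, hp, he1, he2⟩ := ht3 p' hp'
  refine Set.Subset.trans (Set.Icc_subset_Icc ?_ ?_) (hgsub p hp)
  · exact le_of_eq (by exact_mod_cast congrArg (fun q : ℚ => ((q:ℚ):ℝ)) he1)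
  · exact_mod_cast he2
end Fact28

namespace Fact28
open Set
variable {Λ : Type*} (A : Λ → SElem)

theorem sUnion_list_cons (Z : Set ℝ) (L : List (Set ℝ)) :
    ⋃₀ {Y | Y ∈ Z :: L} = Z ∪ ⋃₀ {Y | Y ∈ L} := by
  ext t
  simp only [Set.mem_sUnion, Set.mem_setOf_eq, List.mem_cons, Set.mem_union]
  constructor
  · rintro ⟨Y, (rfl | hY), ht⟩
    · exact Or.inl ht
    · exact Or.inr ⟨Y, hY, ht⟩
  · rintro (ht | ⟨Y, hY, ht⟩)
    · exact ⟨Z, Or.inl rfl, ht⟩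
    · exact ⟨Y, Or.inr hY, ht⟩

theorem sUnion_list_nil : ⋃₀ {Y : Set ℝ | Y ∈ ([] : List (Set ℝ))} = ∅ := by
  simp

theorem sUnion_list_append (L₁ L₂ : List (Set ℝ)) :
    ⋃₀ {Y | Y ∈ L₁ ++ L₂} = ⋃₀ {Y | Y ∈ L₁} ∪ ⋃₀ {Y | Y ∈ L₂} := by
  induction L₁ with
  | nil => simp
  | cons Z T ih =>
    rw [List.cons_append, sUnion_list_cons, sUnion_list_cons, ih, Set.union_assoc]

theorem sUnion_list_map_range (h : ℕ → Set ℝ) (k : ℕ) :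
    ⋃₀ {Y | Y ∈ (List.range k).map h} = ⋃ i ∈ Finset.range k, h i := by
  induction k with
  | zero => simp
  | succ k ih =>
    rw [List.range_succ, List.map_append, sUnion_list_append, ih, Finset.range_add_one,
      Finset.set_biUnion_insert]
    simp only [List.map_cons, List.map_nil, sUnion_list_cons, sUnion_list_nil]
    rw [Set.union_empty, Set.union_comm]

theorem sUnion_list_mU (Mc : List (ℚ × ℚ)) :
    ⋃₀ {Y | Y ∈ Mc.map (fun p => Set.Ioo ((p.1:ℚ):ℝ) ((p.2:ℚ):ℝ))} = mU Mc := by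
  induction Mc with
  | nil => simp
  | cons p T ih =>
    obtain ⟨u, v⟩ := p
    rw [List.map_cons, sUnion_list_cons, ih]
    rfl

theorem Icc_ordered {u v x y : ℝ} (hu : u ≤ v) (hx : x ≤ y)
    (hdisj : Set.Icc u v ∩ Set.Icc x y = ∅) : v < x ∨ y < u := by
  by_contra h
  push_neg at h
  obtain ⟨h1, h2⟩ := h
  have : max u x ∈ Set.Icc u v ∩ Set.Icc x y := by
    constructor
    · exact ⟨le_max_left _ _, max_le hu h1⟩
    · exact ⟨le_max_right _ _, max_le h2 hx⟩
  rw [hdisj] at this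
  exact this

theorem comp_congr {f f' : ℝ → Fin 2} {X : Set ℝ} (h : Comp A f X)
    (hff' : ∀ t ∈ X, f' t = f t) : Comp A f' X := by
  rcases h with ⟨q, r, rfl, k, hk⟩ | ⟨α, n₀, rfl, hfc⟩
  · exact Or.inl ⟨q, r, rfl, k, fun t ht => (hff' t ht).trans (hk t ht)⟩
  · refine Or.inr ⟨α, n₀, rfl, ?_⟩
    intro j k m hm t ht
    have hX : t ∈ ⋃ j : Fin 2, ⋃ m : ℕ, ⋃ (_ : n₀ ≤ m),
        Set.uIoo (((A α).a j (2*m) : ℝ)) (((A α).a j (2*m+1) : ℝ)) := by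
      have heq : 2*(2*m+(k:ℕ)) = 4*m+2*(k:ℕ) := by ring
      refine Set.mem_iUnion.2 ⟨j, Set.mem_iUnion.2 ⟨2*m+(k:ℕ), Set.mem_iUnion.2 ⟨hm, ?_⟩⟩⟩
      rw [heq]
      exact ht
    rw [hff' t hX]
    exact hfc j k m hm t ht

theorem astr_mono (E : SElem) {n₀ M : ℕ} (h : n₀ ≤ M) : AStr E M ⊆ AStr E n₀ := by
  intro t ht
  simp only [AStr, Set.mem_iUnion] at ht ⊢
  obtain ⟨j, m, hm, ht⟩ := ht
  exact ⟨j, m, le_trans h hm, ht⟩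

theorem astr_split (E : SElem) {n₀ M : ℕ} (h : n₀ ≤ M) :
    AStr E n₀ = (⋃ j : Fin 2, ⋃ i ∈ Finset.range (M - n₀),
      Set.uIoo ((E.a j (2*(n₀+i)) : ℝ)) ((E.a j (2*(n₀+i)+1) : ℝ))) ∪ AStr E M := by
  ext t
  simp only [AStr, Set.mem_union, Set.mem_iUnion, Finset.mem_range]
  constructor
  · rintro ⟨j, m, hm, ht⟩
    by_cases hmM : m < M
    · exact Or.inl ⟨j, m - n₀, by omega, by rw [show n₀ + (m - n₀) = m by omega]; exact ht⟩
    · exact Or.inr ⟨j, m, by omega, ht⟩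
  · rintro (⟨j, i, hi, ht⟩ | ⟨j, m, hm, ht⟩)
    · exact ⟨j, n₀ + i, by omega, ht⟩
    · exact ⟨j, m, by omega, ht⟩

theorem comp_g0 {f : ℝ → Fin 2} {α : Λ} {n₀ : ℕ}
    (hfc : ∀ j k : Fin 2, ∀ m : ℕ, n₀ ≤ 2*m + (k : ℕ) →
      ∀ t ∈ Set.uIoo (((A α).a j (4*m+2*(k : ℕ)) : ℝ))
          (((A α).a j (4*m+2*(k : ℕ)+1) : ℝ)), f t = k)
    (m : ℕ) (hm : n₀ ≤ m) :
    Comp A f (Set.uIoo (((A α).a 0 (2*m) : ℝ)) (((A α).a 0 (2*m+1) : ℝ))) := by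
  left
  refine ⟨(A α).a 0 (2*m), (A α).a 0 (2*m+1), uIoo_j0 (A α) m, ⟨m % 2, by omega⟩, ?_⟩
  intro t ht
  have hconst := hfc 0 ⟨m % 2, by omega⟩ (m / 2) (by simp; omega)
  have hidx : 4*(m/2) + 2*((⟨m % 2, by omega⟩ : Fin 2) : ℕ) = 2*m := by simp; omega
  rw [hidx] at hconst
  exact hconst t ht

theorem comp_g1 {f : ℝ → Fin 2} {α : Λ} {n₀ : ℕ}
    (hfc : ∀ j k : Fin 2, ∀ m : ℕ, n₀ ≤ 2*m + (k : ℕ) →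
      ∀ t ∈ Set.uIoo (((A α).a j (4*m+2*(k : ℕ)) : ℝ))
          (((A α).a j (4*m+2*(k : ℕ)+1) : ℝ)), f t = k)
    (m : ℕ) (hm : n₀ ≤ m) :
    Comp A f (Set.uIoo (((A α).a 1 (2*m) : ℝ)) (((A α).a 1 (2*m+1) : ℝ))) := by
  left
  refine ⟨(A α).a 1 (2*m+1), (A α).a 1 (2*m), (uIoo_j1 (A α) m), ⟨m % 2, by omega⟩, ?_⟩
  intro t ht
  have hconst := hfc 1 ⟨m % 2, by omega⟩ (m / 2) (by simp; omega)
  have hidx : 4*(m/2) + 2*((⟨m % 2, by omega⟩ : Fin 2) : ℕ) = 2*m := by simp; omega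
  rw [hidx] at hconst
  exact hconst t ht

end Fact28

namespace Fact28
open Set
variable {Λ : Type*} (A : Λ → SElem)

theorem iUnion_fin_two (h : Fin 2 → Set ℝ) : ⋃ j : Fin 2, h j = h 0 ∪ h 1 := by
  ext t
  simp only [Set.mem_iUnion, Set.mem_union, Fin.exists_fin_two]

theorem sep_of_Ioo_disjoint {u v x y : ℝ} (h1 : u < v) (h2 : x < y)
    (hd : Set.Icc u v ∩ Set.Icc x y = ∅) :
    sep (Set.Ioo u v) (Set.Ioo x y) ∨ sep (Set.Ioo x y) (Set.Ioo u v) := by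
  rcases Icc_ordered h1.le h2.le hd with h | h
  · exact Or.inl (sep_of_bounds (fun t ht => ht.2.le) (fun t ht => ht.1.le) h)
  · exact Or.inr (sep_of_bounds (fun t ht => ht.2.le) (fun t ht => ht.1.le) h)

theorem eventually_M (E : SElem) (Mc : List (ℚ × ℚ)) :
    ∀ᶠ M in Filter.atTop, ∀ p ∈ Mc,
      (((p.2:ℚ):ℝ) < E.limit → ((p.2:ℚ):ℝ) < ((E.a 0 (2*M)):ℝ)) ∧
      (E.limit < ((p.1:ℚ):ℝ) → ((E.a 1 (2*M)):ℝ) < ((p.1:ℚ):ℝ)) := by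
  have htd0 : Filter.Tendsto (fun M => ((E.a 0 (2*M)):ℝ)) Filter.atTop (nhds E.limit) :=
    (E.tendsto 0).comp (Filter.tendsto_atTop_mono (fun m => (by omega : m ≤ 2*m)) Filter.tendsto_id)
  have htd1 : Filter.Tendsto (fun M => ((E.a 1 (2*M)):ℝ)) Filter.atTop (nhds E.limit) :=
    (E.tendsto 1).comp (Filter.tendsto_atTop_mono (fun m => (by omega : m ≤ 2*m)) Filter.tendsto_id)
  induction Mc with
  | nil => filter_upwards with M; simp
  | cons p T ih =>
    have h1 : ∀ᶠ M in Filter.atTop,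
        (((p.2:ℚ):ℝ) < E.limit → ((p.2:ℚ):ℝ) < ((E.a 0 (2*M)):ℝ)) := by
      by_cases hc : ((p.2:ℚ):ℝ) < E.limit
      · filter_upwards [htd0.eventually_const_lt hc] with M hM
        exact fun _ => hM
      · filter_upwards with M
        exact fun hcc => absurd hcc hc
    have h2 : ∀ᶠ M in Filter.atTop,
        (E.limit < ((p.1:ℚ):ℝ) → ((E.a 1 (2*M)):ℝ) < ((p.1:ℚ):ℝ)) := by
      by_cases hc : E.limit < ((p.1:ℚ):ℝ)
      · filter_upwards [htd1.eventually_lt_const hc] with M hM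
        exact fun _ => hM
      · filter_upwards with M
        exact fun hcc => absurd hcc hc
    filter_upwards [h1.and h2, ih] with M hM hT q hq
    rcases List.mem_cons.1 hq with rfl | hq'
    · exact hM
    · exact hT q hq'


def gg0 (E : SElem) (n₀ i : ℕ) : Set ℝ :=
  Set.uIoo ((E.a 0 (2*(n₀+i)) : ℝ)) ((E.a 0 (2*(n₀+i)+1) : ℝ))

def gg1 (E : SElem) (n₀ i : ℕ) : Set ℝ :=
  Set.uIoo ((E.a 1 (2*(n₀+i)) : ℝ)) ((E.a 1 (2*(n₀+i)+1) : ℝ))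

theorem gg0_eq (E : SElem) (n₀ i : ℕ) :
    gg0 E n₀ i = Set.Ioo ((E.a 0 (2*(n₀+i)) : ℝ)) ((E.a 0 (2*(n₀+i)+1) : ℝ)) := uIoo_j0 E _

theorem gg1_eq (E : SElem) (n₀ i : ℕ) :
    gg1 E n₀ i = Set.Ioo ((E.a 1 (2*(n₀+i)+1) : ℝ)) ((E.a 1 (2*(n₀+i)) : ℝ)) := uIoo_j1 E _

theorem gg0_subset (E : SElem) (n₀ i : ℕ) : gg0 E n₀ i ⊆ AStr E n₀ :=
  ioo_subset_astr E 0 (by omega : n₀ ≤ n₀ + i)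

theorem gg1_subset (E : SElem) (n₀ i : ℕ) : gg1 E n₀ i ⊆ AStr E n₀ :=
  ioo_subset_astr E 1 (by omega : n₀ ≤ n₀ + i)

set_option maxHeartbeats 1600000 in
theorem cell {f' : ℝ → Fin 2} (B₀ B₁ : ℚ) (hB : B₀ < B₁)
    (X : Set ℝ) (hcomp : Comp A f' X)
    (hclX : closure X ⊆ Set.Ioo ((B₀:ℚ):ℝ) ((B₁:ℚ):ℝ))
    (Mc : List (ℚ × ℚ)) (hlt : ∀ p ∈ Mc, p.1 < p.2)
    (hsub : ∀ p ∈ Mc, Set.Icc ((p.1:ℚ):ℝ) ((p.2:ℚ):ℝ) ⊆ Set.Ioo ((B₀:ℚ):ℝ) ((B₁:ℚ):ℝ))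
    (hdisj : ∀ p ∈ Mc, Set.Icc ((p.1:ℚ):ℝ) ((p.2:ℚ):ℝ) ∩ closure X = ∅)
    (hpw : Mc.Pairwise (fun p q => p.2 < q.1))
    (hf0 : ∀ p ∈ Mc, ∀ t ∈ Set.Ioo ((p.1:ℚ):ℝ) ((p.2:ℚ):ℝ), f' t = 0) :
    ∃ Lc, Cells A f' B₀ Lc B₁ ∧ lU Lc = X ∪ mU Mc := by
  classical
  have hltR : ∀ p ∈ Mc, ((p.1:ℚ):ℝ) < ((p.2:ℚ):ℝ) := fun p hp => by
    exact_mod_cast hlt p hp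
  have hmks : ∀ p ∈ Mc, Comp A f' (Set.Ioo ((p.1:ℚ):ℝ) ((p.2:ℚ):ℝ)) ∧
      closure (Set.Ioo ((p.1:ℚ):ℝ) ((p.2:ℚ):ℝ)) ⊆ Set.Ioo ((B₀:ℚ):ℝ) ((B₁:ℚ):ℝ) ∧
      (Set.Ioo ((p.1:ℚ):ℝ) ((p.2:ℚ):ℝ)).Nonempty := by
    intro p hp
    refine ⟨Or.inl ⟨p.1, p.2, rfl, 0, hf0 p hp⟩, ?_, Set.nonempty_Ioo.2 (hltR p hp)⟩
    exact (closure_minimal Set.Ioo_subset_Icc_self isClosed_Icc).trans (hsub p hp)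
  have hMSpw : (Mc.map (fun p => Set.Ioo ((p.1:ℚ):ℝ) ((p.2:ℚ):ℝ))).Pairwise
      (fun Y Z => sep Y Z ∨ sep Z Y) := by
    apply List.Pairwise.map (R := fun p q => p.2 < q.1)
    · intro p q hpq
      refine Or.inl (sep_of_bounds (fun t ht => ht.2.le) (fun t ht => ht.1.le) ?_)
      exact_mod_cast hpq
    · exact hpw
  rcases hcomp with ⟨q, r, hXeq, k, hk⟩ | ⟨α, n₀, hXeq, hfc⟩
  · -- rational interval component
    by_cases hqr : (q:ℝ) < (r:ℝ)
    · have hclX' : closure X = Set.Icc (q:ℝ) (r:ℝ) := by rw [hXeq, closure_Ioo hqr.ne]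
      have hcond1 : ∀ Y ∈ X :: Mc.map (fun p => Set.Ioo ((p.1:ℚ):ℝ) ((p.2:ℚ):ℝ)),
          Comp A f' Y ∧ closure Y ⊆ Set.Ioo ((B₀:ℚ):ℝ) ((B₁:ℚ):ℝ) ∧ Y.Nonempty := by
        intro Y hY
        rcases List.mem_cons.1 hY with rfl | hY'
        · exact ⟨Or.inl ⟨q, r, hXeq, k, hk⟩, hclX, by rw [hXeq]; exact Set.nonempty_Ioo.2 hqr⟩
        · obtain ⟨p, hp, rfl⟩ := List.mem_map.1 hY'
          exact hmks p hp
      have hcond2 : (X :: Mc.map (fun p => Set.Ioo ((p.1:ℚ):ℝ) ((p.2:ℚ):ℝ))).Pairwise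
          (fun Y Z => sep Y Z ∨ sep Z Y) := by
        rw [List.pairwise_cons]
        refine ⟨?_, hMSpw⟩
        intro Y hY
        obtain ⟨p, hp, rfl⟩ := List.mem_map.1 hY
        have hd := hdisj p hp
        rw [hclX', Set.inter_comm] at hd
        have := sep_of_Ioo_disjoint hqr (hltR p hp) hd
        rw [← hXeq] at this
        exact this
      obtain ⟨L, hL, hLu⟩ := merge A (X :: Mc.map (fun p => Set.Ioo ((p.1:ℚ):ℝ) ((p.2:ℚ):ℝ))).length
        (X :: Mc.map (fun p => Set.Ioo ((p.1:ℚ):ℝ) ((p.2:ℚ):ℝ))) rfl B₀ B₁ hB hcond1 hcond2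
      refine ⟨L, hL, ?_⟩
      rw [hLu, sUnion_list_cons, sUnion_list_mU]
    · have hXe : X = ∅ := by rw [hXeq, Set.Ioo_eq_empty hqr]
      have hcond1 : ∀ Y ∈ Mc.map (fun p => Set.Ioo ((p.1:ℚ):ℝ) ((p.2:ℚ):ℝ)),
          Comp A f' Y ∧ closure Y ⊆ Set.Ioo ((B₀:ℚ):ℝ) ((B₁:ℚ):ℝ) ∧ Y.Nonempty := by
        intro Y hY
        obtain ⟨p, hp, rfl⟩ := List.mem_map.1 hY
        exact hmks p hp
      obtain ⟨L, hL, hLu⟩ := merge A (Mc.map (fun p => Set.Ioo ((p.1:ℚ):ℝ) ((p.2:ℚ):ℝ))).length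
        (Mc.map (fun p => Set.Ioo ((p.1:ℚ):ℝ) ((p.2:ℚ):ℝ))) rfl B₀ B₁ hB hcond1 hMSpw
      refine ⟨L, hL, ?_⟩
      rw [hLu, sUnion_list_mU, hXe, Set.empty_union]
  · -- α-structure component
    have hXA : X = AStr (A α) n₀ := hXeq
    have hlimit : (A α).limit ∈ closure X := by rw [hXA]; exact limit_mem_closure_astr _ n₀
    have hside : ∀ p ∈ Mc, ((p.2:ℚ):ℝ) < (A α).limit ∨ (A α).limit < ((p.1:ℚ):ℝ) := by
      intro p hp
      by_contra h
      push_neg at h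
      have hmem : (A α).limit ∈ Set.Icc ((p.1:ℚ):ℝ) ((p.2:ℚ):ℝ) ∩ closure X :=
        ⟨⟨h.2, h.1⟩, hlimit⟩
      rw [hdisj p hp] at hmem
      exact hmem
    obtain ⟨M, hM1, hM2⟩ := ((Filter.eventually_ge_atTop n₀).and (eventually_M (A α) Mc)).exists
    have ha0lt : ∀ {i i' : ℕ}, i < i' → ((A α).a 0 i : ℝ) < ((A α).a 0 i' : ℝ) := by
      intro i i' h
      exact_mod_cast (A α).inc h
    have ha1lt : ∀ {i i' : ℕ}, i < i' → ((A α).a 1 i' : ℝ) < ((A α).a 1 i : ℝ) := by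
      intro i i' h
      exact_mod_cast (A α).dec h
    have hb0 : ∀ i, ∀ t ∈ gg0 (A α) n₀ i,
        ((A α).a 0 (2*(n₀+i)) : ℝ) ≤ t ∧ t ≤ ((A α).a 0 (2*(n₀+i)+1) : ℝ) := by
      intro i t ht
      rw [gg0_eq] at ht
      exact ⟨ht.1.le, ht.2.le⟩
    have hb1 : ∀ i, ∀ t ∈ gg1 (A α) n₀ i,
        ((A α).a 1 (2*(n₀+i)+1) : ℝ) ≤ t ∧ t ≤ ((A α).a 1 (2*(n₀+i)) : ℝ) := by
      intro i t ht
      rw [gg1_eq] at ht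
      exact ⟨ht.1.le, ht.2.le⟩
    have hbt : ∀ t ∈ AStr (A α) M, ((A α).a 0 (2*M) : ℝ) ≤ t ∧ t ≤ ((A α).a 1 (2*M) : ℝ) :=
      fun t ht => mem_astr_bounds (A α) M ht
    have hclg0 : ∀ i, closure (gg0 (A α) n₀ i) =
        Set.Icc ((A α).a 0 (2*(n₀+i)) : ℝ) ((A α).a 0 (2*(n₀+i)+1) : ℝ) := by
      intro i
      rw [gg0_eq, closure_Ioo (ha0lt (by omega : 2*(n₀+i) < 2*(n₀+i)+1)).ne]
    have hclg1 : ∀ i, closure (gg1 (A α) n₀ i) =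
        Set.Icc ((A α).a 1 (2*(n₀+i)+1) : ℝ) ((A α).a 1 (2*(n₀+i)) : ℝ) := by
      intro i
      rw [gg1_eq, closure_Ioo (ha1lt (by omega : 2*(n₀+i) < 2*(n₀+i)+1)).ne]
    -- conditions for merge
    have hcond1 : ∀ Y ∈ ((List.range (M-n₀)).map (gg0 (A α) n₀) ++
        ((List.range (M-n₀)).map (gg1 (A α) n₀) ++
          (AStr (A α) M :: Mc.map (fun p => Set.Ioo ((p.1:ℚ):ℝ) ((p.2:ℚ):ℝ))))),
        Comp A f' Y ∧ closure Y ⊆ Set.Ioo ((B₀:ℚ):ℝ) ((B₁:ℚ):ℝ) ∧ Y.Nonempty := by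
      intro Y hY
      rcases List.mem_append.1 hY with hY0 | hY'
      · obtain ⟨i, hi, rfl⟩ := List.mem_map.1 hY0
        refine ⟨comp_g0 A hfc (n₀+i) (by omega), ?_, ?_⟩
        · refine Set.Subset.trans (closure_mono ?_) hclX
          rw [hXA]
          exact gg0_subset _ _ _
        · rw [gg0_eq]
          exact Set.nonempty_Ioo.2 (ha0lt (by omega))
      rcases List.mem_append.1 hY' with hY1 | hY''
      · obtain ⟨i, hi, rfl⟩ := List.mem_map.1 hY1
        refine ⟨comp_g1 A hfc (n₀+i) (by omega), ?_, ?_⟩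
        · refine Set.Subset.trans (closure_mono ?_) hclX
          rw [hXA]
          exact gg1_subset _ _ _
        · rw [gg1_eq]
          exact Set.nonempty_Ioo.2 (ha1lt (by omega))
      rcases List.mem_cons.1 hY'' with rfl | hYm
      · refine ⟨Or.inr ⟨α, M, rfl, fun j k m hm => hfc j k m (by omega)⟩, ?_, astr_nonempty _ _⟩
        refine Set.Subset.trans (closure_mono ?_) hclX
        rw [hXA]
        exact astr_mono _ hM1
      · obtain ⟨p, hp, rfl⟩ := List.mem_map.1 hYm
        exact hmks p hp
    -- disjointness of mined intervals from the pieces of X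
    have hIccX0 : ∀ i, Set.Icc ((A α).a 0 (2*(n₀+i)) : ℝ) ((A α).a 0 (2*(n₀+i)+1) : ℝ) ⊆
        closure X := by
      intro i
      rw [← hclg0]
      refine closure_mono ?_
      rw [hXA]
      exact gg0_subset _ _ _
    have hIccX1 : ∀ i, Set.Icc ((A α).a 1 (2*(n₀+i)+1) : ℝ) ((A α).a 1 (2*(n₀+i)) : ℝ) ⊆
        closure X := by
      intro i
      rw [← hclg1]
      refine closure_mono ?_
      rw [hXA]
      exact gg1_subset _ _ _
    have hsepm0 : ∀ p ∈ Mc, ∀ i, sep (gg0 (A α) n₀ i) (Set.Ioo ((p.1:ℚ):ℝ) ((p.2:ℚ):ℝ)) ∨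
        sep (Set.Ioo ((p.1:ℚ):ℝ) ((p.2:ℚ):ℝ)) (gg0 (A α) n₀ i) := by
      intro p hp i
      have hd : Set.Icc ((A α).a 0 (2*(n₀+i)) : ℝ) ((A α).a 0 (2*(n₀+i)+1) : ℝ) ∩
          Set.Icc ((p.1:ℚ):ℝ) ((p.2:ℚ):ℝ) = ∅ := by
        rw [Set.eq_empty_iff_forall_notMem]
        intro t ⟨ht1, ht2⟩
        have : t ∈ Set.Icc ((p.1:ℚ):ℝ) ((p.2:ℚ):ℝ) ∩ closure X := ⟨ht2, hIccX0 i ht1⟩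
        rw [hdisj p hp] at this
        exact this
      have h := sep_of_Ioo_disjoint (ha0lt (by omega : 2*(n₀+i) < 2*(n₀+i)+1)) (hltR p hp) hd
      rw [← gg0_eq] at h
      exact h
    have hsepm1 : ∀ p ∈ Mc, ∀ i, sep (gg1 (A α) n₀ i) (Set.Ioo ((p.1:ℚ):ℝ) ((p.2:ℚ):ℝ)) ∨
        sep (Set.Ioo ((p.1:ℚ):ℝ) ((p.2:ℚ):ℝ)) (gg1 (A α) n₀ i) := by
      intro p hp i
      have hd : Set.Icc ((A α).a 1 (2*(n₀+i)+1) : ℝ) ((A α).a 1 (2*(n₀+i)) : ℝ) ∩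
          Set.Icc ((p.1:ℚ):ℝ) ((p.2:ℚ):ℝ) = ∅ := by
        rw [Set.eq_empty_iff_forall_notMem]
        intro t ⟨ht1, ht2⟩
        have : t ∈ Set.Icc ((p.1:ℚ):ℝ) ((p.2:ℚ):ℝ) ∩ closure X := ⟨ht2, hIccX1 i ht1⟩
        rw [hdisj p hp] at this
        exact this
      have h := sep_of_Ioo_disjoint (ha1lt (by omega : 2*(n₀+i) < 2*(n₀+i)+1)) (hltR p hp) hd
      rw [← gg1_eq] at h
      exact h
    have hsepmt : ∀ p ∈ Mc,
        sep (AStr (A α) M) (Set.Ioo ((p.1:ℚ):ℝ) ((p.2:ℚ):ℝ)) ∨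
        sep (Set.Ioo ((p.1:ℚ):ℝ) ((p.2:ℚ):ℝ)) (AStr (A α) M) := by
      intro p hp
      rcases hside p hp with hl | hr
      · refine Or.inr (sep_of_bounds (fun t ht => ht.2.le) (fun t ht => (hbt t ht).1) ?_)
        exact (hM2 p hp).1 hl
      · refine Or.inl (sep_of_bounds (fun t ht => (hbt t ht).2) (fun t ht => ht.1.le) ?_)
        exact (hM2 p hp).2 hr
    have hcond2 : ((List.range (M-n₀)).map (gg0 (A α) n₀) ++
        ((List.range (M-n₀)).map (gg1 (A α) n₀) ++
          (AStr (A α) M :: Mc.map (fun p => Set.Ioo ((p.1:ℚ):ℝ) ((p.2:ℚ):ℝ))))).Pairwise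
        (fun Y Z => sep Y Z ∨ sep Z Y) := by
      rw [List.pairwise_append]
      refine ⟨?_, ?_, ?_⟩
      · -- within gg0's
        apply List.Pairwise.map (R := (· < ·))
        · intro i i' hii'
          refine Or.inl (sep_of_bounds (fun t ht => (hb0 i t ht).2)
            (fun t ht => (hb0 i' t ht).1) ?_)
          exact ha0lt (by omega)
        · exact (List.sortedLT_range _).pairwise
      rw [List.pairwise_append]
      refine ⟨?_, ?_, ?_⟩
      · -- within gg1's
        apply List.Pairwise.map (R := (· < ·))
        · intro i i' hii'
          refine Or.inr (sep_of_bounds (fun t ht => (hb1 i' t ht).2)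
            (fun t ht => (hb1 i t ht).1) ?_)
          exact ha1lt (by omega)
        · exact (List.sortedLT_range _).pairwise
      · -- tail :: mined
        rw [List.pairwise_cons]
        constructor
        · intro Y hY
          obtain ⟨p, hp, rfl⟩ := List.mem_map.1 hY
          exact hsepmt p hp
        · exact hMSpw
      · -- gg1 vs (tail :: mined)
        intro Y hY Z hZ
        obtain ⟨i, hi, rfl⟩ := List.mem_map.1 hY
        rcases List.mem_cons.1 hZ with rfl | hZm
        · refine Or.inr (sep_of_bounds (fun t ht => (hbt t ht).2)
            (fun t ht => (hb1 i t ht).1) ?_)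
          have hii : i < M - n₀ := List.mem_range.1 hi
          exact ha1lt (by omega)
        · obtain ⟨p, hp, rfl⟩ := List.mem_map.1 hZm
          exact hsepm1 p hp i
      · -- gg0 vs rest
        intro Y hY Z hZ
        obtain ⟨i, hi, rfl⟩ := List.mem_map.1 hY
        have hii : i < M - n₀ := List.mem_range.1 hi
        rcases List.mem_append.1 hZ with hZ1 | hZ'
        · obtain ⟨i', hi', rfl⟩ := List.mem_map.1 hZ1
          refine Or.inl (sep_of_bounds (fun t ht => (hb0 i t ht).2)
            (fun t ht => (hb1 i' t ht).1) ?_)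
          exact lt_trans ((A α).a_lt_limit _) ((A α).limit_lt_a _)
        rcases List.mem_cons.1 hZ' with rfl | hZm
        · refine Or.inl (sep_of_bounds (fun t ht => (hb0 i t ht).2)
            (fun t ht => (hbt t ht).1) ?_)
          exact ha0lt (by omega)
        · obtain ⟨p, hp, rfl⟩ := List.mem_map.1 hZm
          exact hsepm0 p hp i
    obtain ⟨L, hL, hLu⟩ := merge A _ ((List.range (M-n₀)).map (gg0 (A α) n₀) ++
        ((List.range (M-n₀)).map (gg1 (A α) n₀) ++
          (AStr (A α) M :: Mc.map (fun p => Set.Ioo ((p.1:ℚ):ℝ) ((p.2:ℚ):ℝ))))) rfl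
        B₀ B₁ hB hcond1 hcond2
    refine ⟨L, hL, ?_⟩
    rw [hLu, sUnion_list_append, sUnion_list_append, sUnion_list_cons, sUnion_list_mU,
      sUnion_list_map_range, sUnion_list_map_range, hXA, astr_split (A α) hM1, iUnion_fin_two]
    simp only [gg0, gg1]
    ext t
    simp only [Set.mem_union]
    tauto

end Fact28

namespace Fact28
open Set
variable {Λ : Type*} (A : Λ → SElem)

def walls : List (ℚ × Set ℝ) → ℚ → List ℚ
  | [], y => [y]
  | (w, _) :: T, y => w :: walls T y

theorem hw_mem_walls (L : List (ℚ × Set ℝ)) (y : ℚ) : hw L y ∈ walls L y := by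
  cases L with
  | nil => simp [walls, hw]
  | cons p T => obtain ⟨w, X⟩ := p; simp [walls, hw]

theorem walls_tail_subset (w : ℚ) (X : Set ℝ) (T : List (ℚ × Set ℝ)) (y : ℚ) :
    ∀ u ∈ walls T y, u ∈ walls ((w, X) :: T) y := by
  intro u hu
  simp only [walls, List.mem_cons]
  exact Or.inr hu

theorem mU_split (Mc : List (ℚ × ℚ)) (pb : ℚ × ℚ → Bool) :
    mU Mc = mU (Mc.filter pb) ∪ mU (Mc.filter (fun p => !(pb p))) := by
  induction Mc with
  | nil => simp
  | cons p T ih =>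
    obtain ⟨u, v⟩ := p
    by_cases h : pb (u, v) = true
    · rw [mU_cons, List.filter_cons, if_pos h, List.filter_cons,
        if_neg (by simp [h]), mU_cons, ih]
      ext t; simp only [Set.mem_union]; tauto
    · rw [mU_cons, List.filter_cons, if_neg (by simpa using h), List.filter_cons,
        if_pos (by simp [Bool.not_eq_true] at h; simp [h]), mU_cons, ih]
      ext t; simp only [Set.mem_union]; tauto

theorem glue {f f' : ℝ → Fin 2} :
    ∀ (L : List (ℚ × Set ℝ)) (x y : ℚ) (Mc : List (ℚ × ℚ)),
    Cells A f x L y →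
    (∀ t ∈ lU L, f' t = f t) →
    (∀ p ∈ Mc, p.1 < p.2) →
    Mc.Pairwise (fun p q => p.2 < q.1) →
    (∀ p ∈ Mc, Set.Icc ((p.1:ℚ):ℝ) ((p.2:ℚ):ℝ) ⊆ Set.Ioo ((x:ℚ):ℝ) ((y:ℚ):ℝ)) →
    (∀ p ∈ Mc, Set.Icc ((p.1:ℚ):ℝ) ((p.2:ℚ):ℝ) ∩ closure (lU L) = ∅) →
    (∀ p ∈ Mc, ∀ w ∈ walls L y, ((w:ℚ):ℝ) ∉ Set.Icc ((p.1:ℚ):ℝ) ((p.2:ℚ):ℝ)) →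
    (∀ p ∈ Mc, ∀ t ∈ Set.Ioo ((p.1:ℚ):ℝ) ((p.2:ℚ):ℝ), f' t = 0) →
    ∃ L', Cells A f' x L' y ∧ lU L' = lU L ∪ mU Mc := by
  intro L
  induction L with
  | nil =>
    intro x y Mc hC hff hlt hpw hsub hdisj hwall hf0
    have hxy : x = y := hC
    subst hxy
    cases Mc with
    | nil => exact ⟨[], rfl, by simp⟩
    | cons p T =>
      exfalso
      have h1 := hsub p (by simp)
      have h2 : ((p.1:ℚ):ℝ) ∈ Set.Icc ((p.1:ℚ):ℝ) ((p.2:ℚ):ℝ) :=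
        Set.left_mem_Icc.2 (by exact_mod_cast (hlt p (by simp)).le)
      have := h1 h2
      simp at this
  | cons c T ih =>
    obtain ⟨w, X⟩ := c
    intro x y Mc hC hff hlt hpw hsub hdisj hwall hf0
    obtain ⟨rfl, hlt1, hcl1, hcomp1, htail⟩ := hC
    -- split the mined intervals at the wall z = hw T y
    have hsplit : ∀ p ∈ Mc, (p.2 < hw T y) ∨ (hw T y < p.1) := by
      intro p hp
      have hwmem : hw T y ∈ walls ((x, X) :: T) y :=
        walls_tail_subset x X T y _ (hw_mem_walls T y)
      have hnot := hwall p hp (hw T y) hwmem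
      rw [Set.mem_Icc] at hnot
      push_neg at hnot
      by_cases hc : ((hw T y : ℚ):ℝ) < ((p.1:ℚ):ℝ)
      · right; exact_mod_cast hc
      · push_neg at hc
        left
        exact_mod_cast hnot (by exact_mod_cast hc)
    have hf0' : ∀ p ∈ Mc, ∀ t ∈ Set.Ioo ((p.1:ℚ):ℝ) ((p.2:ℚ):ℝ), f' t = 0 := hf0
    -- Mc₁ : inside this cell; Mc₂ : beyond the wall
    have hM1mem : ∀ p ∈ Mc.filter (fun p => decide (p.2 < hw T y)), p ∈ Mc ∧ p.2 < hw T y := by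
      intro p hp
      have := List.mem_filter.1 hp
      exact ⟨this.1, by simpa using this.2⟩
    have hM2mem : ∀ p ∈ Mc.filter (fun p => !(decide (p.2 < hw T y))),
        p ∈ Mc ∧ hw T y < p.1 := by
      intro p hp
      have h1 := List.mem_filter.1 hp
      have h2 : ¬ (p.2 < hw T y) := by simpa using h1.2
      rcases hsplit p h1.1 with hc | hc
      · exact absurd hc h2
      · exact ⟨h1.1, hc⟩
    -- cell lemma on this cell
    obtain ⟨Lc, hLc, hLcU⟩ := cell A x (hw T y) hlt1 X
      (comp_congr A hcomp1 (fun t ht => hff t (Set.mem_union_left _ ht)))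
      hcl1
      (Mc.filter (fun p => decide (p.2 < hw T y)))
      (fun p hp => hlt p (hM1mem p hp).1)
      (fun p hp => by
        intro t ht
        have h1 := (hsub p (hM1mem p hp).1) ht
        refine ⟨h1.1, ?_⟩
        have h2 : t ≤ ((p.2:ℚ):ℝ) := ht.2
        have h3 : ((p.2:ℚ):ℝ) < ((hw T y : ℚ):ℝ) := by exact_mod_cast (hM1mem p hp).2
        linarith)
      (fun p hp => by
        have hd := hdisj p (hM1mem p hp).1
        rw [Set.eq_empty_iff_forall_notMem] at hd ⊢
        intro t ht
        exact hd t ⟨ht.1, closure_mono (Set.subset_union_left) ht.2⟩)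
      (List.Pairwise.filter _ hpw)
      (fun p hp => hf0 p (hM1mem p hp).1)
    -- induction on the remaining cells
    obtain ⟨L'', hL'', hL''U⟩ := ih (hw T y) y (Mc.filter (fun p => !(decide (p.2 < hw T y))))
      htail
      (fun t ht => hff t (Set.mem_union_right _ ht))
      (fun p hp => hlt p (hM2mem p hp).1)
      (List.Pairwise.filter _ hpw)
      (fun p hp => by
        intro t ht
        have h1 := (hsub p (hM2mem p hp).1) ht
        refine ⟨?_, h1.2⟩
        have h2 : ((p.1:ℚ):ℝ) ≤ t := ht.1
        have h3 : ((hw T y : ℚ):ℝ) < ((p.1:ℚ):ℝ) := by exact_mod_cast (hM2mem p hp).2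
        linarith)
      (fun p hp => by
        have hd := hdisj p (hM2mem p hp).1
        rw [Set.eq_empty_iff_forall_notMem] at hd ⊢
        intro t ht
        exact hd t ⟨ht.1, closure_mono (Set.subset_union_right) ht.2⟩)
      (fun p hp u hu => hwall p (hM2mem p hp).1 u (walls_tail_subset x X T y u hu))
      (fun p hp => hf0 p (hM2mem p hp).1)
    refine ⟨Lc ++ L'', cells_append A hLc hL'', ?_⟩
    rw [lU_append, hLcU, hL''U, mU_split Mc (fun p => decide (p.2 < hw T y))]
    ext t
    simp only [Set.mem_union, lU_cons]
    tauto

end Fact28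

namespace Fact28
open Set MeasureTheory
open scoped ENNReal
variable {Λ : Type*} (A : Λ → SElem)

theorem ple_trans {p q r : Set ℝ × (ℝ → Fin 2)} (h1 : PLe p q) (h2 : PLe q r) : PLe p r := by
  obtain ⟨h11, h12, h13⟩ := h1
  obtain ⟨h21, h22, h23⟩ := h2
  refine ⟨h11.trans h21, fun t ht => (h12 t ht).trans (h22 t (h11 ht)), ?_⟩
  apply Set.Subset.antisymm
  · intro t ht
    have htq : t ∈ closure q.1 ∩ r.1 := ⟨closure_mono h11 ht.1, ht.2⟩
    rw [h23] at htq
    rw [← h13]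
    exact ⟨ht.1, htq⟩
  · intro t ht
    exact ⟨subset_closure ht, h21 (h11 ht)⟩

theorem ofReal_half : ENNReal.ofReal (1/2 : ℝ) = (1/2 : ℝ≥0∞) := by
  rw [ENNReal.ofReal_div_of_pos (by norm_num)]
  norm_num

set_option maxHeartbeats 3200000 in
theorem exists_small_trace
    (r : Set ℝ × (ℝ → Fin 2)) (hr : PCond A r.1 r.2)
    (J : Set (Set ℝ × (ℝ → Fin 2)))
    (hJP : ∀ p ∈ J, PCond A p.1 p.2)
    (hJdense : ∀ p : Set ℝ × (ℝ → Fin 2), PCond A p.1 p.2 → ∃ q ∈ J, PLe p q)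
    (d₀ d₁ : ℝ) (hd : d₀ < d₁) (hd14 : d₁ - d₀ ≤ 1/4)
    (hdr : Set.Ioo d₀ d₁ ∩ r.1 = ∅)
    (η : ℝ) (hη : 0 < η) :
    ∃ r₁ ∈ J, PLe r r₁ ∧ volume (closure r₁.1 ∩ Set.Ioo d₀ d₁) ≤ ENNReal.ofReal η := by
  classical
  have ho := hr.1
  have hUsub := hr.2.1
  have hUm := hr.2.2.1
  obtain ⟨L, hL, hLU⟩ := cells_of_pcond A hr
  set WS : Set ℝ := (fun w : ℚ => ((w:ℚ):ℝ)) '' {w | w ∈ walls L 1} with hWS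
  have hWSfin : WS.Finite := (walls L 1).finite_toSet.image _
  set W : Set ℝ := Set.Ioo 0 1 \ (Set.Icc d₀ d₁ ∪ closure r.1 ∪ WS) with hW
  have hWopen : IsOpen W := by
    apply IsOpen.sdiff isOpen_Ioo
    exact (isClosed_Icc.union isClosed_closure).union hWSfin.isClosed
  have hWsub : W ⊆ Set.Ioo 0 1 := Set.diff_subset
  have hclUb : closure r.1 ⊆ Set.Icc 0 1 :=
    closure_minimal (hUsub.trans Set.Ioo_subset_Icc_self) isClosed_Icc
  have hfin : volume (closure r.1) ≠ ⊤ := by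
    refine ne_top_of_le_ne_top ?_ (measure_mono hclUb)
    rw [Real.volume_Icc]
    simp
  set ν : ℝ := (volume (closure r.1)).toReal with hν
  have hν0 : 0 ≤ ν := ENNReal.toReal_nonneg
  have hνhalf : ν < 1/2 := by
    have h2 : volume (closure r.1) < ENNReal.ofReal (1/2 : ℝ) := by rw [ofReal_half]; exact hUm
    exact (ENNReal.lt_ofReal_iff_toReal_lt hfin).1 h2
  have hνeq : volume (closure r.1) = ENNReal.ofReal ν := (ENNReal.ofReal_toReal hfin).symm
  set s' : ℝ := 1/2 - ν with hs'
  have hs'pos : 0 < s' := by simp only [hs']; linarith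
  set s : ℝ := max 0 (s' - η) with hs
  have hs0 : 0 ≤ s := le_max_left _ _
  have hss' : s < s' := max_lt hs'pos (by linarith)
  have hsν : s + ν < 1/2 := by
    rcases le_or_gt (s' - η) 0 with h | h
    · rw [hs, max_eq_left h]; linarith
    · rw [hs, max_eq_right h.le]; simp only [hs']; linarith
  -- lower bound on volume W
  have hvolW : ENNReal.ofReal s < volume W := by
    by_contra hcon
    push_neg at hcon
    have hcover : Set.Ioo (0:ℝ) 1 ⊆ W ∪ (Set.Icc d₀ d₁ ∪ closure r.1 ∪ WS) := by
      intro t ht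
      by_cases h : t ∈ Set.Icc d₀ d₁ ∪ closure r.1 ∪ WS
      · exact Or.inr h
      · exact Or.inl ⟨ht, h⟩
    have hb : (1 : ℝ≥0∞) ≤ ENNReal.ofReal s + (ENNReal.ofReal (d₁ - d₀) +
        (ENNReal.ofReal ν + 0)) := by
      calc (1:ℝ≥0∞) = volume (Set.Ioo (0:ℝ) 1) := by rw [Real.volume_Ioo]; norm_num
        _ ≤ volume (W ∪ (Set.Icc d₀ d₁ ∪ closure r.1 ∪ WS)) := measure_mono hcover
        _ ≤ volume W + volume (Set.Icc d₀ d₁ ∪ closure r.1 ∪ WS) := measure_union_le _ _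
        _ ≤ volume W + (volume (Set.Icc d₀ d₁ ∪ closure r.1) + volume WS) :=
            add_le_add le_rfl (measure_union_le _ _)
        _ ≤ volume W + ((volume (Set.Icc d₀ d₁) + volume (closure r.1)) + volume WS) :=
            add_le_add le_rfl (add_le_add (measure_union_le _ _) le_rfl)
        _ = volume W + (ENNReal.ofReal (d₁ - d₀) + (ENNReal.ofReal ν + 0)) := by
            rw [Real.volume_Icc, hνeq, hWSfin.countable.measure_zero]
            ring
        _ ≤ ENNReal.ofReal s + (ENNReal.ofReal (d₁ - d₀) + (ENNReal.ofReal ν + 0)) :=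
            add_le_add hcon le_rfl
    have hb2 : (1 : ℝ≥0∞) ≤ ENNReal.ofReal (s + ((d₁ - d₀) + ν)) := by
      have heq : ENNReal.ofReal (s + ((d₁ - d₀) + ν)) =
          ENNReal.ofReal s + (ENNReal.ofReal (d₁ - d₀) + (ENNReal.ofReal ν + 0)) := by
        rw [ENNReal.ofReal_add hs0 (by linarith), ENNReal.ofReal_add (by linarith) hν0, add_zero]
      rw [heq]
      exact hb
    have hlt1 : s + ((d₁ - d₀) + ν) < 1 := by linarith
    have := ENNReal.ofReal_lt_one.2 hlt1
    exact absurd hb2 (not_le.2 this)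
  obtain ⟨Mc, hMlt, hMIcc, hMpw, hMtot1, hMtot2⟩ := mining W hWopen hWsub hs0 hss' hvolW
  set f' : ℝ → Fin 2 := fun t => if t ∈ r.1 then r.2 t else 0 with hf'
  have hWnotU : ∀ t ∈ W, t ∉ closure r.1 := by
    intro t ht hmem
    exact ht.2 (Or.inl (Or.inr hmem))
  have hWnotI : ∀ t ∈ W, t ∉ Set.Icc d₀ d₁ := by
    intro t ht hmem
    exact ht.2 (Or.inl (Or.inl hmem))
  have hWnotWS : ∀ t ∈ W, t ∉ WS := by
    intro t ht hmem
    exact ht.2 (Or.inr hmem)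
  -- apply glue
  obtain ⟨L', hL', hL'U⟩ := glue (A := A) (f := r.2) (f' := f') L 0 1 Mc hL
    (fun t ht => by rw [hLU] at ht; simp only [hf', if_pos ht])
    hMlt hMpw
    (fun p hp => by
      intro t ht
      have := hWsub (hMIcc p hp ht)
      simpa using this)
    (fun p hp => by
      rw [Set.eq_empty_iff_forall_notMem]
      intro t ht
      rw [hLU] at ht
      exact hWnotU t (hMIcc p hp ht.1) ht.2)
    (fun p hp u hu hmem => by
      have h1 := hMIcc p hp hmem
      exact hWnotWS _ h1 ⟨u, hu, rfl⟩)
    (fun p hp t ht => by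
      have h1 := hMIcc p hp (Set.Ioo_subset_Icc_self ht)
      have h2 : t ∉ r.1 := fun hmem => hWnotU t h1 (subset_closure hmem)
      simp only [hf', if_neg h2])
  have hL'Ueq : lU L' = r.1 ∪ mU Mc := by rw [hL'U, hLU]
  -- the condition p
  have htot0 : (0:ℝ) ≤ ((tot Mc : ℚ):ℝ) := le_trans hs0 hMtot1.le
  have hdisjUM : Disjoint (closure r.1) (mU Mc) := by
    rw [Set.disjoint_right]
    intro t ht
    exact hWnotU t (mC_subset_of_Icc Mc hMIcc (mU_subset_mC Mc ht))
  have hclp : closure (r.1 ∪ mU Mc) ⊆ closure r.1 ∪ mC Mc := by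
    rw [closure_union]
    exact Set.union_subset_union (le_refl _) (closure_mU_subset Mc)
  have hvolp : volume (closure (r.1 ∪ mU Mc)) < 1/2 := by
    calc volume (closure (r.1 ∪ mU Mc)) ≤ volume (closure r.1 ∪ mC Mc) := measure_mono hclp
      _ ≤ volume (closure r.1) + volume (mC Mc) := measure_union_le _ _
      _ ≤ ENNReal.ofReal ν + ENNReal.ofReal ((tot Mc : ℚ):ℝ) := by
          rw [hνeq]
          exact add_le_add le_rfl (volume_mC_le Mc hMlt)
      _ = ENNReal.ofReal (ν + ((tot Mc : ℚ):ℝ)) := (ENNReal.ofReal_add hν0 htot0).symm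
      _ < ENNReal.ofReal (1/2) := by
          refine (ENNReal.ofReal_lt_ofReal_iff (by norm_num)).2 ?_
          have h2 := hMtot2
          simp only [hs'] at h2
          linarith
      _ = 1/2 := ofReal_half
  have hpP : PCond A (r.1 ∪ mU Mc) f' := by
    apply pcond_of_cells A hL' hL'Ueq.symm
    · exact ho.union (mU_open Mc)
    · apply Set.union_subset hUsub
      exact (mU_subset_mC Mc).trans ((mC_subset_of_Icc Mc hMIcc).trans hWsub)
    · exact hvolp
  have hrp : PLe r ((r.1 ∪ mU Mc), f') := by
    refine ⟨Set.subset_union_left, fun t ht => ?_, ?_⟩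
    · show r.2 t = f' t
      rw [hf']
      exact (if_pos ht).symm
    apply Set.Subset.antisymm
    · rintro t ⟨ht1, (ht2 | ht2)⟩
      · exact ht2
      · exact absurd ht1
          (fun h => hWnotU t (mC_subset_of_Icc Mc hMIcc (mU_subset_mC Mc ht2)) h)
    · intro t ht
      exact ⟨subset_closure ht, Or.inl ht⟩
  obtain ⟨q, hqJ, hpq⟩ := hJdense ((r.1 ∪ mU Mc), f') hpP
  have hq := hJP q hqJ
  have hqm : volume (closure q.1) < 1/2 := hq.2.2.1
  refine ⟨q, hqJ, ple_trans hrp hpq, ?_⟩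
  have hsubpq : closure (r.1 ∪ mU Mc) ⊆ closure q.1 := closure_mono hpq.1
  have hmCI : mC Mc ∩ Set.Ioo d₀ d₁ = ∅ := by
    rw [Set.eq_empty_iff_forall_notMem]
    rintro t ⟨ht1, ht2⟩
    exact hWnotI t (mC_subset_of_Icc Mc hMIcc ht1) (Set.Ioo_subset_Icc_self ht2)
  have hnull : volume (closure (r.1 ∪ mU Mc) ∩ Set.Ioo d₀ d₁) = 0 := by
    have hsub2 : closure (r.1 ∪ mU Mc) ∩ Set.Ioo d₀ d₁ ⊆ (closure r.1 \ r.1) := by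
      rintro t ⟨ht1, ht2⟩
      rcases hclp ht1 with h | h
      · refine ⟨h, ?_⟩
        intro hmem
        have hbad : t ∈ Set.Ioo d₀ d₁ ∩ r.1 := ⟨ht2, hmem⟩
        rw [hdr] at hbad
        exact hbad
      · exfalso
        have hbad : t ∈ mC Mc ∩ Set.Ioo d₀ d₁ := ⟨h, ht2⟩
        rw [hmCI] at hbad
        exact hbad
    exact measure_mono_null hsub2 (pcond_boundary_null A hr)
  have hIabs : volume (closure (r.1 ∪ mU Mc) \ Set.Ioo d₀ d₁) =
      volume (closure (r.1 ∪ mU Mc)) := by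
    rw [← Set.diff_self_inter]
    exact measure_diff_null hnull
  have hlow : ENNReal.ofReal (ν + ((tot Mc:ℚ):ℝ)) ≤ volume (closure (r.1 ∪ mU Mc)) := by
    have hsubl : closure r.1 ∪ mU Mc ⊆ closure (r.1 ∪ mU Mc) := by
      apply Set.union_subset
      · exact closure_mono Set.subset_union_left
      · exact fun t ht => subset_closure (Or.inr ht)
    calc ENNReal.ofReal (ν + ((tot Mc:ℚ):ℝ))
        = ENNReal.ofReal ν + ENNReal.ofReal ((tot Mc:ℚ):ℝ) := ENNReal.ofReal_add hν0 htot0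
      _ = volume (closure r.1) + volume (mU Mc) := by rw [hνeq, volume_mU Mc hMlt hMpw]
      _ = volume (closure r.1 ∪ mU Mc) :=
          (measure_union hdisjUM (mU_open Mc).measurableSet).symm
      _ ≤ volume (closure (r.1 ∪ mU Mc)) := measure_mono hsubl
  by_contra hcon
  push_neg at hcon
  have hABdisj : Disjoint (closure (r.1 ∪ mU Mc) \ Set.Ioo d₀ d₁)
      (closure q.1 ∩ Set.Ioo d₀ d₁) := by
    rw [Set.disjoint_left]
    rintro t ⟨_, ht2⟩ ⟨_, ht4⟩
    exact ht2 ht4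
  have hABsub : (closure (r.1 ∪ mU Mc) \ Set.Ioo d₀ d₁) ∪ (closure q.1 ∩ Set.Ioo d₀ d₁) ⊆
      closure q.1 :=
    Set.union_subset ((Set.diff_subset).trans hsubpq) Set.inter_subset_left
  have hABm : volume (closure (r.1 ∪ mU Mc) \ Set.Ioo d₀ d₁) +
      volume (closure q.1 ∩ Set.Ioo d₀ d₁) ≤ volume (closure q.1) := by
    rw [← measure_union hABdisj (measurableSet_closure.inter measurableSet_Ioo)]
    exact measure_mono hABsub
  have hclq : (1/2 : ℝ≥0∞) ≤ volume (closure q.1) := by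
    have h1 : (1/2:ℝ) ≤ (ν + ((tot Mc:ℚ):ℝ)) + η := by
      have h2 : s' - η ≤ s := le_max_right 0 (s' - η)
      simp only [hs'] at h2
      linarith [hMtot1]
    calc (1/2:ℝ≥0∞) = ENNReal.ofReal (1/2:ℝ) := ofReal_half.symm
      _ ≤ ENNReal.ofReal ((ν + ((tot Mc:ℚ):ℝ)) + η) := ENNReal.ofReal_le_ofReal h1
      _ = ENNReal.ofReal (ν + ((tot Mc:ℚ):ℝ)) + ENNReal.ofReal η :=
          ENNReal.ofReal_add (by linarith) hη.le
      _ ≤ volume (closure (r.1 ∪ mU Mc) \ Set.Ioo d₀ d₁) +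
          volume (closure q.1 ∩ Set.Ioo d₀ d₁) :=
          add_le_add (by rw [hIabs]; exact hlow) hcon.le
      _ ≤ volume (closure q.1) := hABm
  exact absurd hqm (not_lt.2 hclq)
end Fact28

open Fact28

/-- Fact 2.8: if `r ∈ P`, `J ⊆ P` is dense, and `(c₀,c₁) ⊆ (0,1)` misses `U_r`, then
`(c₀,c₁) ∩ ⋂{cl(U_{r₁}) : r₁ ∈ J, r₁ ≥ r}` is Lebesgue null. -/
theorem dense_closures_null {Λ : Type*} [Countable Λ] (A : Λ → SElem)
    (hdist : ∀ α β, (A α).limit = (A β).limit → α = β)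
    (r : Set ℝ × (ℝ → Fin 2)) (hr : PCond A r.1 r.2)
    (J : Set (Set ℝ × (ℝ → Fin 2)))
    (hJP : ∀ p ∈ J, PCond A p.1 p.2)
    (hJdense : ∀ p : Set ℝ × (ℝ → Fin 2), PCond A p.1 p.2 → ∃ q ∈ J, PLe p q)
    (c₀ c₁ : ℝ) (hc : Set.Ioo c₀ c₁ ⊆ Set.Ioo 0 1)
    (hcr : Set.Ioo c₀ c₁ ∩ r.1 = ∅) :
    volume (Set.Ioo c₀ c₁ ∩ ⋂ r₁ ∈ {r₁ ∈ J | PLe r r₁}, closure r₁.1) = 0 := by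
  classical
  set K := Set.Ioo c₀ c₁ ∩ ⋂ r₁ ∈ {r₁ ∈ J | PLe r r₁}, closure r₁.1 with hK
  have hcover : K ⊆ ⋃ k : ℚ, K ∩ Set.Ioo (max ((k:ℝ) - 1/8) c₀) (min ((k:ℝ) + 1/8) c₁) := by
    intro x hx
    have hx1 : x ∈ Set.Ioo c₀ c₁ := hx.1
    obtain ⟨k, hk1, hk2⟩ := exists_rat_btwn (show x - 1/8 < x by linarith)
    refine Set.mem_iUnion.2 ⟨k, hx, ?_, ?_⟩
    · exact max_lt (by linarith) hx1.1
    · exact lt_min (by linarith) hx1.2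
  refine measure_mono_null hcover ?_
  apply MeasureTheory.measure_iUnion_null
  intro k
  by_cases hd : max ((k:ℝ) - 1/8) c₀ < min ((k:ℝ) + 1/8) c₁
  · have h14 : min ((k:ℝ) + 1/8) c₁ - max ((k:ℝ) - 1/8) c₀ ≤ 1/4 := by
      have h1 : (k:ℝ) - 1/8 ≤ max ((k:ℝ) - 1/8) c₀ := le_max_left _ _
      have h2 : min ((k:ℝ) + 1/8) c₁ ≤ (k:ℝ) + 1/8 := min_le_left _ _
      linarith
    have hsubcc : Set.Ioo (max ((k:ℝ) - 1/8) c₀) (min ((k:ℝ) + 1/8) c₁) ⊆ Set.Ioo c₀ c₁ :=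
      Set.Ioo_subset_Ioo (le_max_right _ _) (min_le_right _ _)
    have hdr : Set.Ioo (max ((k:ℝ) - 1/8) c₀) (min ((k:ℝ) + 1/8) c₁) ∩ r.1 = ∅ := by
      rw [Set.eq_empty_iff_forall_notMem]
      rintro t ⟨ht1, ht2⟩
      have hbad : t ∈ Set.Ioo c₀ c₁ ∩ r.1 := ⟨hsubcc ht1, ht2⟩
      rw [hcr] at hbad
      exact hbad
    have hbound : ∀ η : ℝ, 0 < η →
        volume (K ∩ Set.Ioo (max ((k:ℝ) - 1/8) c₀) (min ((k:ℝ) + 1/8) c₁)) ≤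
          ENNReal.ofReal η := by
      intro η hη
      obtain ⟨r₁, hr₁J, hr₁le, hr₁m⟩ := exists_small_trace A r hr J hJP hJdense
        (max ((k:ℝ) - 1/8) c₀) (min ((k:ℝ) + 1/8) c₁) hd h14 hdr η hη
      refine le_trans (measure_mono ?_) hr₁m
      rintro t ⟨ht1, ht2⟩
      refine ⟨?_, ht2⟩
      have hKint := ht1.2
      exact Set.mem_iInter₂.1 hKint r₁ ⟨hr₁J, hr₁le⟩
    refine le_antisymm ?_ zero_le
    refine ENNReal.le_of_forall_pos_le_add ?_
    intro ε hε _
    rw [zero_add]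
    have := hbound (ε:ℝ) (by exact_mod_cast hε)
    rwa [ENNReal.ofReal_coe_nnreal] at this
  · have hempty : Set.Ioo (max ((k:ℝ) - 1/8) c₀) (min ((k:ℝ) + 1/8) c₁) = ∅ :=
      Set.Ioo_eq_empty hd
    rw [hempty, Set.inter_empty]
    exact MeasureTheory.measure_empty
end
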